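/- arXiv:2111.04166 — 5 statements merged into one kernel-verified Lean document; each statement's English description precedes it below -/
import Mathlib

section
/- Let K be a field and let R(x) = g(x)/h(x) be a rational expression of degree r ≥ 1 over K, where g(x) = ∑_i g_i x^i and h(x) = ∑_i h_i x^i are coprime polynomials with max(deg g, deg h) = r. Let f(x) ∈ K[x] be a nonzero polynomial. Then deg f_R = r·deg f unless both h_r ≠ 0 and f(g_r/h_r) = 0. -/
/-!
Each term `f_i g^i h^(n-i)` of `f_R` has degree at most `r n`, with `x^(r n)`-coefficient
`f_i g_r^i h_r^(n-i)`. Hence the `x^(r n)`-coefficient of `f_R` is the homogenization of `f`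
evaluated at `(g_r, h_r)`: it equals `h_r^n f(g_r/h_r)` when `h_r ≠ 0`, and `f_n g_r^n` when
`h_r = 0`, in which case `g_r ≠ 0` because one of `g`, `h` has degree exactly `r ≥ 1`.
-/

open Polynomial

/-- The transform `f_R` of a nonzero polynomial `f` by the rational expression `R = g/h`:
`f_R(x) = h(x)^(deg f) * f(g(x)/h(x)) = ∑_{i=0}^{deg f} f_i g(x)^i h(x)^(deg f - i)`. -/
noncomputable def ratTransform {K : Type*} [Field K] (g h f : K[X]) : K[X] :=
  ∑ i ∈ Finset.range (f.natDegree + 1), C (f.coeff i) * g ^ i * h ^ (f.natDegree - i)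

section CommSemiring

variable {R : Type*} [CommSemiring R]

theorem eval_homogenize_eq_sum_range (p : R[X]) (n : ℕ) (x : Fin 2 → R) :
    MvPolynomial.eval x (p.homogenize n) =
      ∑ i ∈ Finset.range (n + 1), p.coeff i * x 0 ^ i * x 1 ^ (n - i) := by
  simp only [homogenize, MvPolynomial.eval_sum, Finset.Nat.sum_antidiagonal_eq_sum_range_succ_mk]
  refine Finset.sum_congr rfl fun i _ ↦ ?_
  rw [MvPolynomial.eval_monomial, Finsupp.prod_fintype _ _ (by simp)]
  simp [mul_assoc]

theorem eval_homogenize_of_eq_zero (p : R[X]) (n : ℕ) {x : Fin 2 → R} (hx : x 1 = 0) :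
    MvPolynomial.eval x (p.homogenize n) = p.coeff n * x 0 ^ n := by
  rw [eval_homogenize_eq_sum_range, Finset.sum_eq_single n]
  · simp
  · intro i _ hin
    rw [hx, zero_pow (by grind), mul_zero]
  · simp

variable {g h : R[X]} {r i n : ℕ}

theorem natDegree_pow_mul_pow_sub_le (hg : g.natDegree ≤ r) (hh : h.natDegree ≤ r) (hi : i ≤ n) :
    (g ^ i * h ^ (n - i)).natDegree ≤ r * n :=
  calc (g ^ i * h ^ (n - i)).natDegree ≤ i * r + (n - i) * r :=
        natDegree_mul_le_of_le (natDegree_pow_le_of_le i hg) (natDegree_pow_le_of_le _ hh)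
    _ = r * n := by rw [← add_mul, Nat.add_sub_cancel' hi, mul_comm]

theorem coeff_pow_mul_pow_sub (hg : g.natDegree ≤ r) (hh : h.natDegree ≤ r) (hi : i ≤ n) :
    (g ^ i * h ^ (n - i)).coeff (r * n) = g.coeff r ^ i * h.coeff r ^ (n - i) := by
  have hrn : r * n = i * r + (n - i) * r := by rw [← add_mul, Nat.add_sub_cancel' hi, mul_comm]
  rw [hrn, coeff_mul_add_eq_of_natDegree_le (natDegree_pow_le_of_le i hg)
    (natDegree_pow_le_of_le _ hh), coeff_pow_of_natDegree_le hg, coeff_pow_of_natDegree_le hh]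

end CommSemiring

theorem coeff_ne_zero_of_natDegree_eq {R : Type*} [Semiring R] {p : R[X]} {r : ℕ}
    (hp : p.natDegree = r) (hr : 0 < r) : p.coeff r ≠ 0 :=
  hp ▸ leadingCoeff_ne_zero.mpr (ne_zero_of_natDegree_gt (hp ▸ hr))

section RatTransform

variable {K : Type*} [Field K] {g h : K[X]} {r : ℕ}

theorem natDegree_ratTransform_le (hg : g.natDegree ≤ r) (hh : h.natDegree ≤ r) (f : K[X]) :
    (ratTransform g h f).natDegree ≤ r * f.natDegree := by
  refine natDegree_sum_le_of_forall_le _ _ fun i hi ↦ ?_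
  rw [mul_assoc]
  exact (natDegree_C_mul_le _ _).trans <|
    natDegree_pow_mul_pow_sub_le hg hh (Finset.mem_range_succ_iff.mp hi)

theorem coeff_ratTransform_mul_natDegree (hg : g.natDegree ≤ r) (hh : h.natDegree ≤ r)
    (f : K[X]) :
    (ratTransform g h f).coeff (r * f.natDegree) =
      MvPolynomial.eval ![g.coeff r, h.coeff r] (f.homogenize f.natDegree) := by
  rw [ratTransform, finsetSum_coeff, eval_homogenize_eq_sum_range]
  refine Finset.sum_congr rfl fun i hi ↦ ?_
  rw [mul_assoc, coeff_C_mul, coeff_pow_mul_pow_sub hg hh (Finset.mem_range_succ_iff.mp hi)]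
  simp [mul_assoc]

end RatTransform

theorem stmt0_general {K : Type*} [Field K] (g h : K[X])
    (r : ℕ) (hr : 1 ≤ r) (hdeg : max g.natDegree h.natDegree = r)
    (f : K[X]) (hf : f ≠ 0)
    (hexc : ¬ (h.coeff r ≠ 0 ∧ f.eval (g.coeff r / h.coeff r) = 0)) :
    (ratTransform g h f).natDegree = r * f.natDegree := by
  have hg : g.natDegree ≤ r := le_of_max_le_left hdeg.le
  have hh : h.natDegree ≤ r := le_of_max_le_right hdeg.le
  refine (natDegree_ratTransform_le hg hh f).antisymm (le_natDegree_of_ne_zero ?_)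
  rw [coeff_ratTransform_mul_natDegree hg hh]
  by_cases hhr : h.coeff r = 0
  · have hgr : g.coeff r ≠ 0 := by
      rcases max_choice g.natDegree h.natDegree with hmax | hmax <;> rw [hmax] at hdeg
      · exact coeff_ne_zero_of_natDegree_eq hdeg hr
      · exact absurd hhr (coeff_ne_zero_of_natDegree_eq hdeg hr)
    rw [eval_homogenize_of_eq_zero _ _ hhr]
    exact mul_ne_zero (leadingCoeff_ne_zero.mpr hf) (pow_ne_zero _ hgr)
  · rw [eval_homogenize le_rfl _ hhr]
    exact mul_ne_zero (fun hev ↦ hexc ⟨hhr, hev⟩) (pow_ne_zero _ hhr)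

/-- Lemma 1(a): `deg f_R = r · deg f` unless `h_r ≠ 0` and `f(g_r/h_r) = 0`. -/
theorem stmt0 {K : Type*} [Field K] (g h : K[X]) (hcop : IsCoprime g h)
    (r : ℕ) (hr : 1 ≤ r) (hdeg : max g.natDegree h.natDegree = r)
    (f : K[X]) (hf : f ≠ 0)
    (hexc : ¬ (h.coeff r ≠ 0 ∧ f.eval (g.coeff r / h.coeff r) = 0)) :
    (ratTransform g h f).natDegree = r * f.natDegree :=
  stmt0_general g h r hr hdeg f hf hexc
end

section
/- Let R(x) = g(x)/h(x) be a rational expression of degree r ≥ 1 over the finite field F_q, with g, h coprime. Let A(x) and B(x) be linear rational expressions (Möbius transformations, i.e. rational expressions of degree 1) over F_q, and write (B ∘ R ∘ A)(x) = g̃(x)/h̃(x) with g̃, h̃ coprime. Then for every integer n > 1, |𝓘(g̃, h̃, n, q)| = |𝓘(g, h, n, q)|. -/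
open Polynomial

/-- `𝓘(g,h,n,q)`: the set of monic irreducible polynomials `f` of degree `n` over the field
such that `f_R` is irreducible. -/
noncomputable def IrredSet {K : Type*} [Field K] (g h : K[X]) (n : ℕ) : Set K[X] :=
  {f | f.Monic ∧ Irreducible f ∧ f.natDegree = n ∧ Irreducible (ratTransform g h f)}

/-!
Write `homEval p n g h = h ^ n p(g / h)`, so that `f_R = homEval f (deg f) g h`. Homogeneous
substitution composes, hence `f_{R ∘ A}` is the image of `f_R` under the Möbius action
`P ↦ (c x + d) ^ m P((a x + b) / (c x + d))` of `A`, and the action of `A⁻¹` undoes that of `A` up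
to the scalar `(det A) ^ m`. A Möbius action that keeps the degree also keeps irreducibility, since
the degrees of the factors cannot drop. Coprimality of `g, h` makes `R ∘ A` have degree `r` again,
and `f` has no roots, so `f_R` and `f_{R ∘ A}` both have degree `n r`: thus
`𝓘(R ∘ A, n) = 𝓘(R, n)`. On the other side, `(f_B)_R` is a scalar multiple of `f_{B ∘ R}`, so
`f ↦ monic(f_B)` is a bijection `𝓘(B ∘ R, n) → 𝓘(R, n)`, inverted by `B⁻¹`.
-/

section IsCoprime

variable {R : Type*} [CommRing R]

theorem IsCoprime.mul_add_mul_of_isUnit_det {x y : R} (h : IsCoprime x y) {a b c d : R}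
    (hdet : IsUnit (a * d - b * c)) : IsCoprime (a * x + b * y) (c * x + d * y) := by
  obtain ⟨u, v, huv⟩ := h
  obtain ⟨e, he⟩ := hdet.exists_left_inv
  exact ⟨e * (u * d - v * c), e * (v * a - u * b),
    by linear_combination (u * x + v * y) * he + huv⟩

theorem IsCoprime.exists_isUnit_of_mul_eq_mul {g h U V : R} (hgh : IsCoprime g h)
    (hUV : IsCoprime U V) (heq : g * V = h * U) : ∃ w, IsUnit w ∧ U = g * w ∧ V = h * w := by
  obtain ⟨x, y, hxy⟩ := hgh
  obtain ⟨x', y', hxy'⟩ := hUV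
  have hU : U = g * (x * U + y * V) := by linear_combination (-y) * heq - U * hxy
  have hV : V = h * (x * U + y * V) := by linear_combination x * heq - V * hxy
  refine ⟨x * U + y * V, IsUnit.of_mul_eq_one_right (x' * g + y' * h) ?_, hU, hV⟩
  linear_combination hxy' - x' * hU - y' * hV

theorem ne_zero_or_ne_zero_of_det_ne_zero {a b c d : R} (hdet : a * d - b * c ≠ 0) :
    a ≠ 0 ∨ c ≠ 0 := by
  by_contra! h
  simp [h.1, h.2] at hdet

end IsCoprime

namespace Polynomial

section HomEval

variable {R A : Type*} [CommRing R] [CommRing A] [Algebra R A]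

/-- `homEval p n g h = h ^ n * p (g / h)`, for `n ≥ natDegree p`. -/
noncomputable def homEval (p : R[X]) (n : ℕ) (g h : A) : A :=
  MvPolynomial.aeval ![g, h] (p.homogenize n)

theorem homEval_eq_sum (p : R[X]) (n : ℕ) (g h : A) :
    homEval p n g h
      = ∑ i ∈ Finset.range (n + 1), algebraMap R A (p.coeff i) * g ^ i * h ^ (n - i) := by
  simp only [homEval, homogenize, map_sum, MvPolynomial.aeval_monomial,
    Finset.Nat.sum_antidiagonal_eq_sum_range_succ_mk]
  refine Finset.sum_congr rfl fun i _ => ?_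
  rw [Finsupp.update_eq_add_single, Finsupp.prod_add_index', Finsupp.prod_single_index,
    Finsupp.prod_single_index]
  all_goals simp [pow_add, mul_assoc]

theorem homEval_eq_sum_C (p : R[X]) (n : ℕ) (g h : R[X]) :
    homEval p n g h = ∑ i ∈ Finset.range (n + 1), C (p.coeff i) * g ^ i * h ^ (n - i) :=
  homEval_eq_sum p n g h

theorem homEval_sum {ι : Type*} (s : Finset ι) (p : ι → R[X]) (n : ℕ) (g h : A) :
    homEval (∑ i ∈ s, p i) n g h = ∑ i ∈ s, homEval (p i) n g h := by
  simp [homEval, homogenize_finsetSum]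

theorem homEval_C_mul (c : R) (p : R[X]) (n : ℕ) (g h : A) :
    homEval (C c * p) n g h = algebraMap R A c * homEval p n g h := by
  simp [homEval, homogenize_C_mul]

theorem homEval_mul {p q : R[X]} {m k : ℕ} (hp : p.natDegree ≤ m) (hq : q.natDegree ≤ k)
    (g h : A) : homEval (p * q) (m + k) g h = homEval p m g h * homEval q k g h := by
  simp [homEval, homogenize_mul p q hp hq]

theorem homEval_pow {p : R[X]} {m : ℕ} (hp : p.natDegree ≤ m) (k : ℕ) (g h : A) :
    homEval (p ^ k) (k * m) g h = homEval p m g h ^ k := by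
  induction k with
  | zero => simp [homEval_eq_sum]
  | succ k ih =>
    rw [pow_succ, add_mul, one_mul, homEval_mul (natDegree_pow_le_of_le k hp) hp, ih, pow_succ]

theorem homEval_X_one {p : R[X]} {n : ℕ} (hp : p.natDegree ≤ n) : homEval p n (X : R[X]) 1 = p :=
  aeval_homogenize_X_one p hp

theorem homEval_mul_mul (p : R[X]) (n : ℕ) (c g h : A) :
    homEval p n (c * g) (c * h) = c ^ n * homEval p n g h := by
  rw [homEval_eq_sum, homEval_eq_sum, Finset.mul_sum]
  refine Finset.sum_congr rfl fun i hi => ?_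
  obtain ⟨k, rfl⟩ := Nat.exists_eq_add_of_le (Finset.mem_range_succ_iff.mp hi)
  rw [Nat.add_sub_cancel_left]
  ring

theorem homEval_zero_right (p : R[X]) (n : ℕ) (g : A) :
    homEval p n g 0 = algebraMap R A (p.coeff n) * g ^ n := by
  rw [homEval_eq_sum, Finset.sum_eq_single_of_mem n (Finset.self_mem_range_succ n)]
  · simp
  · intro i hi hin
    rw [zero_pow (by grind), mul_zero]

theorem homEval_C_mul_X_add_C (a b : R) (g h : A) :
    homEval (C a * X + C b) 1 g h = algebraMap R A a * g + algebraMap R A b * h := by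
  simp [homEval_eq_sum, Finset.sum_range_succ, coeff_C, add_comm]

theorem map_homEval {B : Type*} [CommRing B] [Algebra R B] (φ : A →ₐ[R] B) (p : R[X]) (n : ℕ)
    (g h : A) : φ (homEval p n g h) = homEval p n (φ g) (φ h) := by
  simp [homEval_eq_sum]

theorem homEval_comp (f : R[X]) {g h : R[X]} {n r : ℕ} (hg : g.natDegree ≤ r)
    (hh : h.natDegree ≤ r) (u v : A) :
    homEval f n (homEval g r u v) (homEval h r u v) = homEval (homEval f n g h) (n * r) u v := by
  rw [homEval_eq_sum f n g h, homEval_sum, homEval_eq_sum]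
  refine Finset.sum_congr rfl fun i hi => ?_
  have hin : i * r + (n - i) * r = n * r := by
    rw [← add_mul, Nat.add_sub_cancel' (Finset.mem_range_succ_iff.mp hi)]
  rw [algebraMap_eq, mul_assoc (C _), homEval_C_mul, ← hin,
    homEval_mul (natDegree_pow_le_of_le i hg) (natDegree_pow_le_of_le _ hh), homEval_pow hg,
    homEval_pow hh, mul_assoc]

theorem natDegree_homEval_le (p : R[X]) (n : ℕ) {g h : R[X]} {s : ℕ} (hg : g.natDegree ≤ s)
    (hh : h.natDegree ≤ s) : (homEval p n g h).natDegree ≤ n * s := by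
  rw [homEval_eq_sum_C]
  refine natDegree_sum_le_of_forall_le _ _ fun i hi => ?_
  obtain ⟨k, rfl⟩ := Nat.exists_eq_add_of_le (Finset.mem_range_succ_iff.mp hi)
  rw [Nat.add_sub_cancel_left, add_mul]
  refine (natDegree_mul_le_of_le (natDegree_C_mul_le _ _) (natDegree_pow_le_of_le k hh)).trans ?_
  exact add_le_add_left (natDegree_pow_le_of_le i hg) _

theorem coeff_homEval (p : R[X]) (n : ℕ) {g h : R[X]} {s : ℕ} (hg : g.natDegree ≤ s)
    (hh : h.natDegree ≤ s) :
    (homEval p n g h).coeff (n * s) = homEval p n (g.coeff s) (h.coeff s) := by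
  rw [homEval_eq_sum_C, homEval_eq_sum, finsetSum_coeff]
  refine Finset.sum_congr rfl fun i hi => ?_
  obtain ⟨k, rfl⟩ := Nat.exists_eq_add_of_le (Finset.mem_range_succ_iff.mp hi)
  rw [Nat.add_sub_cancel_left, mul_assoc, coeff_C_mul, add_mul,
    coeff_mul_add_eq_of_natDegree_le (natDegree_pow_le_of_le i hg) (natDegree_pow_le_of_le k hh),
    coeff_pow_of_natDegree_le hg, coeff_pow_of_natDegree_le hh, Algebra.algebraMap_self,
    RingHom.id_apply, mul_assoc]

theorem natDegree_homEval_eq {p g h : R[X]} {n s : ℕ} (hg : g.natDegree ≤ s)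
    (hh : h.natDegree ≤ s) (htop : homEval p n (g.coeff s) (h.coeff s) ≠ 0) :
    (homEval p n g h).natDegree = n * s :=
  (natDegree_homEval_le p n hg hh).antisymm
    (le_natDegree_of_ne_zero (by rwa [coeff_homEval p n hg hh]))

end HomEval

section Field

variable {F K : Type*} [Field F] [Field K] [Algebra F K]

theorem ratTransform_eq_homEval (g h f : F[X]) :
    ratTransform g h f = homEval f f.natDegree g h :=
  (homEval_eq_sum_C f _ g h).symm

theorem homEval_eq_pow_mul_aeval {p : F[X]} {n : ℕ} (hp : p.natDegree ≤ n) (a : K) {b : K}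
    (hb : b ≠ 0) : homEval p n a b = b ^ n * aeval (a / b) p := by
  rw [homEval_eq_sum, aeval_eq_sum_range' (Nat.lt_succ_of_le hp), Finset.mul_sum]
  refine Finset.sum_congr rfl fun i hi => ?_
  obtain ⟨k, rfl⟩ := Nat.exists_eq_add_of_le (Finset.mem_range_succ_iff.mp hi)
  rw [Nat.add_sub_cancel_left, Algebra.smul_def, div_pow, pow_add]
  field_simp

theorem homEval_ne_zero_of_forall_not_isRoot {p : F[X]} {n : ℕ} (hp : p.natDegree = n)
    (hroot : ∀ x, ¬ p.IsRoot x) {a b : F} (hab : a ≠ 0 ∨ b ≠ 0) : homEval p n a b ≠ 0 := by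
  rcases eq_or_ne b 0 with rfl | hb
  · have hp0 : p ≠ 0 := fun h0 => hroot 0 (by simp [h0])
    rw [homEval_zero_right, ← hp, Algebra.algebraMap_self, RingHom.id_apply]
    exact mul_ne_zero (leadingCoeff_ne_zero.mpr hp0) (pow_ne_zero _ (hab.resolve_right (by simp)))
  · rw [homEval_eq_pow_mul_aeval hp.le a hb, aeval_def, Algebra.algebraMap_self, eval₂_id]
    exact mul_ne_zero (pow_ne_zero _ hb) (hroot _)

theorem IsCoprime.homEval_ne_zero_or {g h : F[X]} (hcop : IsCoprime g h) {r : ℕ}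
    (hg : g.natDegree ≤ r) (hh : h.natDegree ≤ r) (htop : g.coeff r ≠ 0 ∨ h.coeff r ≠ 0)
    {a b : K} (hab : a ≠ 0 ∨ b ≠ 0) : homEval g r a b ≠ 0 ∨ homEval h r a b ≠ 0 := by
  rcases eq_or_ne b 0 with rfl | hb
  · have ha : a ^ r ≠ 0 := pow_ne_zero _ (hab.resolve_right (by simp))
    simp only [homEval_zero_right]
    exact htop.imp (fun hc => mul_ne_zero (by simpa using hc) ha)
      (fun hc => mul_ne_zero (by simpa using hc) ha)
  · rw [homEval_eq_pow_mul_aeval hg a hb, homEval_eq_pow_mul_aeval hh a hb]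
    exact (aeval_ne_zero_of_isCoprime hcop (a / b)).imp (mul_ne_zero (pow_ne_zero _ hb))
      (mul_ne_zero (pow_ne_zero _ hb))

theorem IsCoprime.coeff_max_natDegree_ne_zero {g h : F[X]} (hcop : IsCoprime g h) :
    g.coeff (max g.natDegree h.natDegree) ≠ 0 ∨ h.coeff (max g.natDegree h.natDegree) ≠ 0 := by
  wlog hle : h.natDegree ≤ g.natDegree generalizing g h
  · simpa only [max_comm, or_comm] using this hcop.symm (le_of_not_ge hle)
  rw [max_eq_left hle]
  rcases eq_or_ne g 0 with rfl | hg0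
  · have hh0 : h ≠ 0 := by rintro rfl; exact not_isCoprime_zero_zero hcop
    rw [natDegree_zero, Nat.le_zero] at hle
    exact Or.inr (by rw [natDegree_zero, ← hle]; exact leadingCoeff_ne_zero.2 hh0)
  · exact Or.inl (leadingCoeff_ne_zero.2 hg0)

theorem isUnit_of_ne_zero_of_natDegree_eq_zero {p : F[X]} (hp : p ≠ 0) (hd : p.natDegree = 0) :
    IsUnit p :=
  isUnit_iff_degree_eq_zero.2 (by rw [degree_eq_natDegree hp, hd]; rfl)

theorem irreducible_of_irreducible_homEval {Q u v : F[X]} {m : ℕ} (hu : u.natDegree ≤ 1)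
    (hv : v.natDegree ≤ 1) (hQ : Q.natDegree = m) (hdeg : (homEval Q m u v).natDegree = m)
    (hirr : Irreducible (homEval Q m u v)) : Irreducible Q := by
  have hQ0 : Q ≠ 0 := by
    rintro rfl
    simp [homEval_eq_sum] at hirr
  refine ⟨fun hQu => hirr.not_isUnit (isUnit_of_ne_zero_of_natDegree_eq_zero hirr.ne_zero ?_),
    fun x y hxy => ?_⟩
  · rw [hdeg, ← hQ, natDegree_eq_zero_of_isUnit hQu]
  obtain ⟨hx0, hy0⟩ := mul_ne_zero_iff.mp (hxy ▸ hQ0)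
  have hsplit : homEval Q m u v = homEval x x.natDegree u v * homEval y y.natDegree u v := by
    rw [← homEval_mul le_rfl le_rfl, ← natDegree_mul hx0 hy0, ← hxy, hQ]
  obtain ⟨hx0', hy0'⟩ := mul_ne_zero_iff.mp (hsplit ▸ hirr.ne_zero)
  have hxy_deg : x.natDegree + y.natDegree = m := by rw [← natDegree_mul hx0 hy0, ← hxy, hQ]
  have hx_le := natDegree_homEval_le x x.natDegree hu hv
  have hy_le := natDegree_homEval_le y y.natDegree hu hv
  rw [mul_one] at hx_le hy_le
  rw [hsplit, natDegree_mul hx0' hy0'] at hdeg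
  -- the degree bounds are attained, so a unit factor of `homEval Q m u v` comes from a constant
  -- factor of `Q`
  refine (hirr.isUnit_or_isUnit hsplit).imp (fun hxu => ?_) (fun hyu => ?_)
  · have := natDegree_eq_zero_of_isUnit hxu
    exact isUnit_of_ne_zero_of_natDegree_eq_zero hx0 (by omega)
  · have := natDegree_eq_zero_of_isUnit hyu
    exact isUnit_of_ne_zero_of_natDegree_eq_zero hy0 (by omega)

end Field

section Mobius

theorem homEval_homEval_linear {R : Type*} [CommRing R] {p : R[X]} {m : ℕ}
    (hp : p.natDegree ≤ m) (a b c d : R) :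
    homEval (homEval p m (C a * X + C b) (C c * X + C d)) m (C d * X + C (-b)) (C (-c) * X + C a)
      = C ((a * d - b * c) ^ m) * p := by
  have hcomp := homEval_comp p (n := m) (natDegree_linear_le (a := a) (b := b))
    (natDegree_linear_le (a := c) (b := d)) (C d * X + C (-b)) (C (-c) * X + C a)
  have hnum : homEval (C a * X + C b) 1 (C d * X + C (-b)) (C (-c) * X + C a)
      = C (a * d - b * c) * X := by
    rw [homEval_C_mul_X_add_C, algebraMap_eq, map_sub, map_mul, map_mul, map_neg, map_neg]
    ring
  have hden : homEval (C c * X + C d) 1 (C d * X + C (-b)) (C (-c) * X + C a)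
      = C (a * d - b * c) * 1 := by
    rw [homEval_C_mul_X_add_C, algebraMap_eq, map_sub, map_mul, map_mul, map_neg, map_neg]
    ring
  rw [mul_one] at hcomp
  rw [← hcomp, hnum, hden, homEval_mul_mul, homEval_X_one hp, C_pow]

variable {F : Type*} [Field F] {a b c d : F}

theorem aeval_linear_ne_zero_or {K : Type*} [Field K] [Algebra F K] (hdet : a * d - b * c ≠ 0)
    (z : K) : aeval z (C a * X + C b) ≠ 0 ∨ aeval z (C c * X + C d) ≠ 0 := by
  by_contra! h
  simp only [map_add, map_mul, aeval_C, aeval_X] at h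
  apply hdet
  apply (algebraMap F K).injective
  simp only [map_sub, map_mul, map_zero]
  linear_combination algebraMap F K a * h.2 - algebraMap F K c * h.1

theorem IsCoprime.C_mul_add_C_mul {G H : F[X]} (hcop : IsCoprime G H)
    (hdet : a * d - b * c ≠ 0) : IsCoprime (C a * G + C b * H) (C c * G + C d * H) :=
  hcop.mul_add_mul_of_isUnit_det (by rw [← C_mul, ← C_mul, ← C_sub]; exact isUnit_C.2 hdet.isUnit)

theorem IsCoprime.homEval_linear {g h : F[X]} (hcop : IsCoprime g h) {r : ℕ}
    (hg : g.natDegree ≤ r) (hh : h.natDegree ≤ r) (htop : g.coeff r ≠ 0 ∨ h.coeff r ≠ 0)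
    (hdet : a * d - b * c ≠ 0) :
    IsCoprime (homEval g r (C a * X + C b) (C c * X + C d))
      (homEval h r (C a * X + C b) (C c * X + C d)) := by
  refine (isCoprime_iff_aeval_ne_zero_of_isAlgClosed F (AlgebraicClosure F) _ _).2 fun z => ?_
  rw [map_homEval, map_homEval]
  exact hcop.homEval_ne_zero_or hg hh htop (aeval_linear_ne_zero_or hdet z)

theorem natDegree_homEval_linear_le (p : F[X]) (n : ℕ) :
    (homEval p n (C a * X + C b) (C c * X + C d)).natDegree ≤ n := by
  simpa using natDegree_homEval_le p n (natDegree_linear_le (a := a) (b := b))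
    (natDegree_linear_le (a := c) (b := d))

theorem coeff_homEval_linear (p : F[X]) (n : ℕ) :
    (homEval p n (C a * X + C b) (C c * X + C d)).coeff n = homEval p n a c := by
  simpa using coeff_homEval p n (natDegree_linear_le (a := a) (b := b))
    (natDegree_linear_le (a := c) (b := d))

theorem homEval_linear_ne_zero (hdet : a * d - b * c ≠ 0) {p : F[X]} (hp : p ≠ 0) {n : ℕ}
    (hpn : p.natDegree ≤ n) : homEval p n (C a * X + C b) (C c * X + C d) ≠ 0 := by
  intro h0
  have hinv := homEval_homEval_linear hpn a b c d
  rw [h0, homEval_eq_sum] at hinv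
  simp only [coeff_zero, map_zero, zero_mul, Finset.sum_const_zero] at hinv
  exact mul_ne_zero (C_ne_zero.2 (pow_ne_zero n hdet)) hp hinv.symm

theorem natDegree_homEval_linear_eq (hdet : a * d - b * c ≠ 0) {f : F[X]} {n : ℕ}
    (hf : f.natDegree = n) (hroot : ∀ x, ¬ f.IsRoot x) :
    (homEval f n (C a * X + C b) (C c * X + C d)).natDegree = n := by
  refine (natDegree_homEval_linear_le f n).antisymm (le_natDegree_of_ne_zero ?_)
  rw [coeff_homEval_linear]
  exact homEval_ne_zero_of_forall_not_isRoot hf hroot (ne_zero_or_ne_zero_of_det_ne_zero hdet)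

theorem irreducible_homEval_linear_iff (hdet : a * d - b * c ≠ 0) {p : F[X]} {m : ℕ}
    (hp : p.natDegree = m) (hQ : (homEval p m (C a * X + C b) (C c * X + C d)).natDegree = m) :
    Irreducible (homEval p m (C a * X + C b) (C c * X + C d)) ↔ Irreducible p := by
  refine ⟨irreducible_of_irreducible_homEval natDegree_linear_le natDegree_linear_le hp hQ,
    fun hirr => irreducible_of_irreducible_homEval (u := C d * X + C (-b))
      (v := C (-c) * X + C a) natDegree_linear_le natDegree_linear_le hQ ?_ ?_⟩
  · rw [homEval_homEval_linear hp.le, natDegree_C_mul (pow_ne_zero _ hdet), hp]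
  · rw [homEval_homEval_linear hp.le]
    exact (irreducible_isUnit_mul (isUnit_C.2 (pow_ne_zero _ hdet).isUnit)).2 hirr

theorem irreducible_ratTransform_homEval_linear_iff {g h : F[X]} (hcop : IsCoprime g h) {r : ℕ}
    (hg : g.natDegree ≤ r) (hh : h.natDegree ≤ r) (htop : g.coeff r ≠ 0 ∨ h.coeff r ≠ 0)
    (hdet : a * d - b * c ≠ 0) {f : F[X]} (hroot : ∀ x, ¬ f.IsRoot x) :
    Irreducible (ratTransform (homEval g r (C a * X + C b) (C c * X + C d))
        (homEval h r (C a * X + C b) (C c * X + C d)) f)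
      ↔ Irreducible (ratTransform g h f) := by
  have hP : (homEval f f.natDegree g h).natDegree = f.natDegree * r :=
    natDegree_homEval_eq hg hh (homEval_ne_zero_of_forall_not_isRoot rfl hroot htop)
  rw [ratTransform_eq_homEval, ratTransform_eq_homEval, homEval_comp f hg hh]
  refine irreducible_homEval_linear_iff hdet hP ?_
  rw [← homEval_comp f hg hh]
  refine natDegree_homEval_eq (natDegree_homEval_linear_le g r) (natDegree_homEval_linear_le h r)
    (homEval_ne_zero_of_forall_not_isRoot rfl hroot ?_)
  rw [coeff_homEval_linear, coeff_homEval_linear]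
  exact hcop.homEval_ne_zero_or hg hh htop (ne_zero_or_ne_zero_of_det_ne_zero hdet)

theorem irredSet_homEval_linear {g h : F[X]} (hcop : IsCoprime g h) {r : ℕ}
    (hg : g.natDegree ≤ r) (hh : h.natDegree ≤ r) (htop : g.coeff r ≠ 0 ∨ h.coeff r ≠ 0)
    (hdet : a * d - b * c ≠ 0) {n : ℕ} (hn : 2 ≤ n) :
    IrredSet (homEval g r (C a * X + C b) (C c * X + C d))
      (homEval h r (C a * X + C b) (C c * X + C d)) n = IrredSet g h n := by
  ext f
  refine and_congr_right fun _ => and_congr_right fun hirr => and_congr_right fun hfn => ?_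
  exact irreducible_ratTransform_homEval_linear_iff hcop hg hh htop hdet
    fun x => hirr.not_isRoot_of_natDegree_ne_one (by omega)

theorem C_leadingCoeff_inv_mul_C_mul {f : F[X]} (hf : f.Monic) {k : F} (hk : k ≠ 0) :
    C (C k * f).leadingCoeff⁻¹ * (C k * f) = f := by
  rw [leadingCoeff_C_mul_of_isUnit hk.isUnit, hf.leadingCoeff, mul_one, ← mul_assoc, ← C_mul,
    inv_mul_cancel₀ hk, C_1, one_mul]

noncomputable def mobiusMonic (a b c d : F) (n : ℕ) (f : F[X]) : F[X] :=
  C (homEval f n (C a * X + C b) (C c * X + C d)).leadingCoeff⁻¹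
    * homEval f n (C a * X + C b) (C c * X + C d)

theorem mobiusMonic_monic_irreducible (hdet : a * d - b * c ≠ 0) {f : F[X]} {n : ℕ}
    (hf : f.Monic) (hirr : Irreducible f) (hfn : f.natDegree = n) (hn : 2 ≤ n) :
    (mobiusMonic a b c d n f).Monic ∧ Irreducible (mobiusMonic a b c d n f)
      ∧ (mobiusMonic a b c d n f).natDegree = n := by
  have hQ := natDegree_homEval_linear_eq hdet hfn
    fun x => hirr.not_isRoot_of_natDegree_ne_one (by omega)
  have hQ0 : homEval f n (C a * X + C b) (C c * X + C d) ≠ 0 :=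
    homEval_linear_ne_zero hdet hf.ne_zero hfn.le
  have hℓ := inv_ne_zero (leadingCoeff_ne_zero.2 hQ0)
  refine ⟨?_, ?_, by rw [mobiusMonic, natDegree_C_mul hℓ, hQ]⟩
  · rw [mobiusMonic, mul_comm]
    exact monic_mul_leadingCoeff_inv hQ0
  · exact (irreducible_isUnit_mul (isUnit_C.2 hℓ.isUnit)).2
      ((irreducible_homEval_linear_iff hdet hfn hQ).2 hirr)

theorem mobiusMonic_mobiusMonic (hdet : a * d - b * c ≠ 0) {f : F[X]} {n : ℕ} (hf : f.Monic)
    (hfn : f.natDegree ≤ n) : mobiusMonic d (-b) (-c) a n (mobiusMonic a b c d n f) = f := by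
  have hℓ := inv_ne_zero (leadingCoeff_ne_zero.2 (homEval_linear_ne_zero hdet hf.ne_zero hfn))
  rw [mobiusMonic, mobiusMonic, homEval_C_mul, homEval_homEval_linear hfn, algebraMap_eq,
    ← mul_assoc (C _) (C ((a * d - b * c) ^ n)) f, ← C_mul]
  exact C_leadingCoeff_inv_mul_C_mul hf (mul_ne_zero hℓ (pow_ne_zero n hdet))

theorem associated_homEval_mobiusMonic (hdet : a * d - b * c ≠ 0) {G H G' H' u : F[X]}
    (hu : IsUnit u) (hG' : C a * G + C b * H = G' * u) (hH' : C c * G + C d * H = H' * u)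
    {f : F[X]} (hf : f ≠ 0) {n : ℕ} (hfn : f.natDegree ≤ n) :
    Associated (homEval (mobiusMonic a b c d n f) n G H) (homEval f n G' H') := by
  have hℓ := inv_ne_zero (leadingCoeff_ne_zero.2 (homEval_linear_ne_zero hdet hf hfn))
  have hcomp := homEval_comp f (n := n) (natDegree_linear_le (a := a) (b := b))
    (natDegree_linear_le (a := c) (b := d)) G H
  simp only [mul_one, homEval_C_mul_X_add_C, algebraMap_eq] at hcomp
  rw [hG', hH', mul_comm G', mul_comm H', homEval_mul_mul] at hcomp
  rw [mobiusMonic, homEval_C_mul, ← hcomp, algebraMap_eq, ← mul_assoc]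
  exact associated_unit_mul_left _ _ ((isUnit_C.2 hℓ.isUnit).mul (hu.pow n))

theorem ncard_irredSet_eq_of_mobius_comp (hdet : a * d - b * c ≠ 0) {G H G' H' u : F[X]}
    (hu : IsUnit u) (hG' : C a * G + C b * H = G' * u) (hH' : C c * G + C d * H = H' * u)
    {n : ℕ} (hn : 2 ≤ n) : (IrredSet G' H' n).ncard = (IrredSet G H n).ncard := by
  have hdet' : d * a - -b * -c ≠ 0 := by rwa [show d * a - -b * -c = a * d - b * c by ring]
  have key : ∀ f : F[X], f.Monic → Irreducible f → f.natDegree = n →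
      (Irreducible (ratTransform G H (mobiusMonic a b c d n f))
        ↔ Irreducible (ratTransform G' H' f)) := by
    intro f hf hirr hfn
    rw [ratTransform_eq_homEval, ratTransform_eq_homEval,
      (mobiusMonic_monic_irreducible hdet hf hirr hfn hn).2.2, hfn]
    exact (associated_homEval_mobiusMonic hdet hu hG' hH' hf.ne_zero hfn.le).irreducible_iff
  refine Set.BijOn.ncard_eq (f := mobiusMonic a b c d n) <|
    Set.InvOn.bijOn (f' := mobiusMonic d (-b) (-c) a n)
      ⟨fun f hf => mobiusMonic_mobiusMonic hdet hf.1 hf.2.2.1.le, fun q hq => ?_⟩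
      (fun f hf => ?_) (fun q hq => ?_)
  · simpa using mobiusMonic_mobiusMonic hdet' hq.1 hq.2.2.1.le
  · obtain ⟨hf, hirr, hfn, hR⟩ := hf
    obtain ⟨hf', hirr', hfn'⟩ := mobiusMonic_monic_irreducible hdet hf hirr hfn hn
    exact ⟨hf', hirr', hfn', (key f hf hirr hfn).2 hR⟩
  · obtain ⟨hq, hirr, hqn, hR⟩ := hq
    obtain ⟨hf', hirr', hfn'⟩ := mobiusMonic_monic_irreducible hdet' hq hirr hqn hn
    have hinv := mobiusMonic_mobiusMonic hdet' hq hqn.le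
    rw [neg_neg, neg_neg] at hinv
    refine ⟨hf', hirr', hfn', (key _ hf' hirr' hfn').1 ?_⟩
    rwa [hinv]

end Mobius

end Polynomial

theorem stmt2_general {F : Type*} [Field F] (g h : F[X]) (hcop : IsCoprime g h)
    (r : ℕ) (hdeg : max g.natDegree h.natDegree = r)
    (a₁ b₁ c₁ d₁ a₂ b₂ c₂ d₂ : F)
    (hMA : a₁ * d₁ - b₁ * c₁ ≠ 0) (hMB : a₂ * d₂ - b₂ * c₂ ≠ 0)
    (gA hA g' h' : F[X])
    (hgA : gA = ∑ i ∈ Finset.range (r + 1),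
      C (g.coeff i) * (C a₁ * X + C b₁) ^ i * (C c₁ * X + C d₁) ^ (r - i))
    (hhA : hA = ∑ i ∈ Finset.range (r + 1),
      C (h.coeff i) * (C a₁ * X + C b₁) ^ i * (C c₁ * X + C d₁) ^ (r - i))
    (hcop' : IsCoprime g' h')
    (hfrac : g' * (C c₂ * gA + C d₂ * hA) = h' * (C a₂ * gA + C b₂ * hA))
    (n : ℕ) (hn : 1 < n) :
    (IrredSet g' h' n).ncard = (IrredSet g h n).ncard := by
  have hg : g.natDegree ≤ r := hdeg ▸ le_max_left _ _
  have hh : h.natDegree ≤ r := hdeg ▸ le_max_right _ _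
  have htop : g.coeff r ≠ 0 ∨ h.coeff r ≠ 0 := hdeg ▸ hcop.coeff_max_natDegree_ne_zero
  rw [← homEval_eq_sum_C] at hgA hhA
  subst hgA hhA
  obtain ⟨u, hu, hU, hV⟩ := hcop'.exists_isUnit_of_mul_eq_mul
    ((hcop.homEval_linear hg hh htop hMA).C_mul_add_C_mul hMB) hfrac
  rw [ncard_irredSet_eq_of_mobius_comp hMB hu hU hV hn,
    irredSet_homEval_linear hcop hg hh htop hMA hn]

/-- Lemma 2: invariance of `|𝓘(g,h,n,q)|` under pre- and post-composition of `R = g/h`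
with Möbius transformations `A(x) = (a₁x+b₁)/(c₁x+d₁)` and `B(x) = (a₂x+b₂)/(c₂x+d₂)`.
Here `gA/hA` is the composite `R ∘ A` (written with the common denominator `(c₁x+d₁)^r`),
and `g'/h'` is a coprime representation of `B ∘ R ∘ A`, expressed by the cross-multiplication
identity `hfrac`. -/
theorem stmt2 {F : Type*} [Field F] [Fintype F] (g h : F[X]) (hcop : IsCoprime g h)
    (r : ℕ) (hr : 1 ≤ r) (hdeg : max g.natDegree h.natDegree = r)
    (a₁ b₁ c₁ d₁ a₂ b₂ c₂ d₂ : F)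
    (hMA : a₁ * d₁ - b₁ * c₁ ≠ 0) (hMB : a₂ * d₂ - b₂ * c₂ ≠ 0)
    (gA hA g' h' : F[X])
    (hgA : gA = ∑ i ∈ Finset.range (r + 1),
      C (g.coeff i) * (C a₁ * X + C b₁) ^ i * (C c₁ * X + C d₁) ^ (r - i))
    (hhA : hA = ∑ i ∈ Finset.range (r + 1),
      C (h.coeff i) * (C a₁ * X + C b₁) ^ i * (C c₁ * X + C d₁) ^ (r - i))
    (hcop' : IsCoprime g' h')
    (hfrac : g' * (C c₂ * gA + C d₂ * hA) = h' * (C a₂ * gA + C b₂ * hA))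
    (n : ℕ) (hn : 1 < n) :
    (IrredSet g' h' n).ncard = (IrredSet g h n).ncard :=
  stmt2_general g h hcop r hdeg a₁ b₁ c₁ d₁ a₂ b₂ c₂ d₂ hMA hMB gA hA g' h' hgA hhA hcop' hfrac n hn
end

section
/- Let g(x), h(x) ∈ F_q[x] be coprime with g monic of degree 3 and deg h ≤ 2, and let n ≥ 1. Then |Ū(n,q)| = (2q^n + A − B − 2C − 2D)/3, where A is the number of distinct roots of h(x) in F_{q^n}; B is the number of β ∈ F_{q^n} for which g(x) − β h(x) has a double root and a distinct simple root in F_{q^n}; C is the number of β ∈ F_{q^n} for which g(x) − β h(x) has a triple root in F_{q^n}; and D is the number of β ∈ F_{q^n} for which g(x) − β h(x) has an irreducible quadratic factor in F_{q^n}[x]. -/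
open Polynomial

/-- `Ū(m,q)`: the set of `β` in the extension `E` (a field with `q^m` elements)
such that `g(x) − β h(x)` is irreducible over `E`. -/
noncomputable def Ubar {F : Type*} [Field F] (g h : F[X]) (E : Type*) [Field E]
    [Algebra F E] : Set E :=
  {β | Irreducible (g.map (algebraMap F E) - C β * h.map (algebraMap F E))}

/-!
Write `f_β = g − β h`, a monic cubic over `E` for every `β`. A point `x` with `h(x) ≠ 0` is a
root of exactly one `f_β`, namely for `β = g(x)/h(x)`, while a root of `h` is a root of none
because `g` and `h` are coprime; hence `∑_β #roots(f_β) = q^n − A`. On the other hand a monic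
cubic is irreducible (no root), has an irreducible quadratic factor (one root), a triple root (one
root), a double and a simple root (two roots) or three simple roots, so
`#roots(f_β) + 3[f_β irreducible] + [double root] + 2[triple root] + 2[quadratic factor] = 3`.
Summing over `β` gives `3 q^n = q^n − A + 3|Ū| + B + 2C + 2D`.
-/

open Classical in
lemma Set.ncard_setOf_eq_sum_ite {α : Type*} [Fintype α] (p : α → Prop) :
    {x | p x}.ncard = ∑ x, if p x then 1 else 0 := by
  rw [Set.ncard_eq_toFinset_card', Set.toFinset_ofPred, Finset.card_filter]

lemma sum_ncard_setOf_sub_mul_eq_zero_add_ncard {α K : Type*} [Fintype α] [Field K] [Fintype K]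
    (u v : α → K) (huv : ∀ x, v x = 0 → u x ≠ 0) :
    ∑ β : K, {x | u x - β * v x = 0}.ncard + {x | v x = 0}.ncard = Fintype.card α := by
  classical
  have hfiber (x : α) : {β : K | u x - β * v x = 0}.ncard = if v x = 0 then 0 else 1 := by
    split_ifs with hv
    · simp [hv, huv x hv]
    · refine Set.ncard_eq_one.mpr ⟨u x / v x, Set.ext fun β => ?_⟩
      rw [Set.mem_ofPred_eq, Set.mem_singleton_iff, sub_eq_zero, eq_div_iff hv, eq_comm]
  have hswap : ∑ β : K, {x | u x - β * v x = 0}.ncard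
      = ∑ x, {β : K | u x - β * v x = 0}.ncard := by
    simp only [Set.ncard_setOf_eq_sum_ite]
    exact Finset.sum_comm
  rw [hswap, Set.ncard_setOf_eq_sum_ite, ← Finset.sum_add_distrib, ← Finset.card_univ,
    Finset.card_eq_sum_ones]
  refine Finset.sum_congr rfl fun x _ => ?_
  rw [hfiber]
  split_ifs <;> rfl

namespace Polynomial

variable {K : Type*} [Field K] {f : K[X]}

lemma ncard_setOf_isRoot_of_natDegree_eq_one (hf : f.natDegree = 1) :
    {x | f.IsRoot x}.ncard = 1 := by
  obtain ⟨x, hx⟩ :=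
    exists_root_of_degree_eq_one ((degree_eq_iff_natDegree_eq_of_pos one_pos).mpr hf)
  exact Set.ncard_eq_one.mpr
    ⟨x, (subsingleton_isRoot_of_natDegree_eq_one hf).eq_singleton_of_mem hx⟩

lemma not_dvd_prod_X_sub_C {u : K[X]} (hu : Irreducible u) (hdeg : 2 ≤ u.natDegree)
    (s : Multiset K) : ¬ u ∣ (s.map fun a => X - C a).prod := by
  intro hdvd
  obtain ⟨a, -, ha⟩ := hu.prime.exists_mem_multiset_map_dvd hdvd
  have := natDegree_le_of_dvd ha (X_sub_C_ne_zero a)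
  rw [natDegree_X_sub_C] at this
  omega

lemma setOf_isRoot_X_sub_C_mul_X_sub_C_mul_X_sub_C (x y z : K) :
    {w | ((X - C x) * (X - C y) * (X - C z)).IsRoot w} = {x, y, z} := by
  ext w
  simp [sub_eq_zero, or_assoc]

lemma setOf_isRoot_X_sub_C_sq_mul_X_sub_C (x y : K) :
    {w | ((X - C x) ^ 2 * (X - C y)).IsRoot w} = {x, y} := by
  ext w
  simp [sub_eq_zero]

lemma setOf_isRoot_X_sub_C_pow_three (x : K) :
    {w | ((X - C x) ^ 3).IsRoot w} = {x} := by
  ext w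
  simp [sub_eq_zero]

lemma ncard_setOf_isRoot_of_irreducible_dvd {u : K[X]} (hf : f.natDegree = 3)
    (hu : Irreducible u) (hu2 : u.natDegree = 2) (hdvd : u ∣ f) :
    {x | f.IsRoot x}.ncard = 1 := by
  obtain ⟨v, rfl⟩ := hdvd
  have hv : v ≠ 0 := by rintro rfl; simp at hf
  have hv1 : v.natDegree = 1 := by
    rw [natDegree_mul hu.ne_zero hv] at hf; omega
  rw [← ncard_setOf_isRoot_of_natDegree_eq_one hv1]
  congr 1
  ext x
  have hux : ¬ u.IsRoot x := hu.not_isRoot_of_natDegree_ne_one (by omega)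
  simp only [Set.mem_ofPred_eq, IsRoot.def, eval_mul, mul_eq_zero]
  exact or_iff_right hux

lemma Monic.exists_eq_X_sub_C_mul (hf : f.Monic) {a : K} (ha : f.IsRoot a) :
    ∃ k : K[X], k.Monic ∧ k.natDegree + 1 = f.natDegree ∧ f = (X - C a) * k := by
  obtain ⟨k, hk⟩ := dvd_iff_isRoot.mpr ha
  have hkm : k.Monic := (monic_X_sub_C a).of_mul_monic_left (hk ▸ hf)
  refine ⟨k, hkm, ?_, hk⟩
  rw [hk, (monic_X_sub_C a).natDegree_mul hkm, natDegree_X_sub_C, add_comm]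

lemma Monic.exists_isRoot_of_not_irreducible (hf : f.Monic) (h2 : 2 ≤ f.natDegree)
    (h3 : f.natDegree ≤ 3) (hirr : ¬ Irreducible f) : ∃ a, f.IsRoot a := by
  rw [hf.irreducible_iff_roots_eq_zero_of_degree_le_three h2 h3] at hirr
  obtain ⟨a, ha⟩ := Multiset.exists_mem_of_ne_zero hirr
  exact ⟨a, isRoot_of_mem_roots ha⟩

lemma Monic.cubic_trichotomy (hf : f.Monic) (hdeg : f.natDegree = 3) :
    Irreducible f ∨ (∃ u : K[X], Irreducible u ∧ u.natDegree = 2 ∧ u ∣ f) ∨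
      ∃ x y z : K, f = (X - C x) * (X - C y) * (X - C z) := by
  refine or_iff_not_imp_left.mpr fun hirr => ?_
  obtain ⟨x, hx⟩ := hf.exists_isRoot_of_not_irreducible (by omega) (by omega) hirr
  obtain ⟨k, hkm, hk, rfl⟩ := hf.exists_eq_X_sub_C_mul hx
  refine or_iff_not_imp_left.mpr fun hquad => ?_
  have hkirr : ¬ Irreducible k := fun hk' => hquad ⟨k, hk', by omega, dvd_mul_left k _⟩
  obtain ⟨y, hy⟩ := hkm.exists_isRoot_of_not_irreducible (by omega) (by omega) hkirr
  obtain ⟨l, hlm, hl, rfl⟩ := hkm.exists_eq_X_sub_C_mul hy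
  obtain ⟨c, rfl⟩ : ∃ c, l = X + C c := ⟨_, hlm.eq_X_add_C (by omega)⟩
  exact ⟨x, y, -c, by rw [map_neg, sub_neg_eq_add, mul_assoc]⟩

lemma X_sub_C_mul_X_sub_C_mul_X_sub_C_cases (x y z : K) :
    (x ≠ y ∧ x ≠ z ∧ y ≠ z) ∨
      (∃ a b, a ≠ b ∧ (X - C x) * (X - C y) * (X - C z) = (X - C a) ^ 2 * (X - C b)) ∨
      ∃ a, (X - C x) * (X - C y) * (X - C z) = (X - C a) ^ 3 := by
  rcases eq_or_ne x y with rfl | hxy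
  · rcases eq_or_ne x z with rfl | hxz
    · exact Or.inr (Or.inr ⟨x, by ring⟩)
    · exact Or.inr (Or.inl ⟨x, z, hxz, by ring⟩)
  · rcases eq_or_ne x z with rfl | hxz
    · exact Or.inr (Or.inl ⟨x, y, hxy, by ring⟩)
    · rcases eq_or_ne y z with rfl | hyz
      · exact Or.inr (Or.inl ⟨y, x, hxy.symm, by ring⟩)
      · exact Or.inl ⟨hxy, hxz, hyz⟩

open Classical in
theorem Monic.ncard_setOf_isRoot_add_eq_three (hf : f.Monic) (hdeg : f.natDegree = 3) :
    {x | f.IsRoot x}.ncard + 3 * (if Irreducible f then 1 else 0)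
      + (if ∃ x y, x ≠ y ∧ f = (X - C x) ^ 2 * (X - C y) then 1 else 0)
      + 2 * (if ∃ x, f = (X - C x) ^ 3 then 1 else 0)
      + 2 * (if ∃ u : K[X], Irreducible u ∧ u.natDegree = 2 ∧ u ∣ f then 1 else 0) = 3 := by
  have hU : Irreducible f → {x | f.IsRoot x}.ncard = 0 := fun hirr => by
    rw [← Set.ncard_empty K]
    exact congrArg Set.ncard (hirr.isRoot_eq_bot_of_natDegree_ne_one (by omega))
  have hB : (∃ x y, x ≠ y ∧ f = (X - C x) ^ 2 * (X - C y)) →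
      {x | f.IsRoot x}.ncard = 2 := by
    rintro ⟨x, y, hxy, rfl⟩
    rw [setOf_isRoot_X_sub_C_sq_mul_X_sub_C, Set.ncard_pair hxy]
  have hC : (∃ x, f = (X - C x) ^ 3) → {x | f.IsRoot x}.ncard = 1 := by
    rintro ⟨x, rfl⟩
    rw [setOf_isRoot_X_sub_C_pow_three, Set.ncard_singleton]
  have hD : (∃ u : K[X], Irreducible u ∧ u.natDegree = 2 ∧ u ∣ f) →
      {x | f.IsRoot x}.ncard = 1 := fun ⟨u, hu, hu2, hdvd⟩ =>
    ncard_setOf_isRoot_of_irreducible_dvd hdeg hu hu2 hdvd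
  have hCD : (∃ x, f = (X - C x) ^ 3) →
      ¬ ∃ u : K[X], Irreducible u ∧ u.natDegree = 2 ∧ u ∣ f := by
    rintro ⟨x, rfl⟩ ⟨u, hu, hu2, hdvd⟩
    exact not_dvd_prod_X_sub_C hu hu2.ge {x, x, x} (by simpa [pow_three] using hdvd)
  rcases hf.cubic_trichotomy hdeg with hirr | hquad | ⟨x, y, z, rfl⟩
  · have := hU hirr
    split_ifs <;> grind
  · have := hD hquad
    split_ifs <;> grind
  · have hirr : ¬ Irreducible ((X - C x) * (X - C y) * (X - C z)) := fun h =>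
      h.not_isRoot_of_natDegree_ne_one (by omega) (x := x) (by simp)
    have hquad : ¬ ∃ u : K[X], Irreducible u ∧ u.natDegree = 2 ∧
        u ∣ (X - C x) * (X - C y) * (X - C z) := fun ⟨u, hu, hu2, hdvd⟩ =>
      not_dvd_prod_X_sub_C hu hu2.ge {x, y, z} (by simpa [mul_assoc] using hdvd)
    rcases X_sub_C_mul_X_sub_C_mul_X_sub_C_cases x y z with ⟨hxy, hxz, hyz⟩ | hB' | hC'
    · have : {w | ((X - C x) * (X - C y) * (X - C z)).IsRoot w}.ncard = 3 := by
        rw [setOf_isRoot_X_sub_C_mul_X_sub_C_mul_X_sub_C,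
          Set.ncard_eq_three.mpr ⟨x, y, z, hxy, hxz, hyz, rfl⟩]
      split_ifs <;> grind
    · have := hB hB'
      split_ifs <;> grind
    · have := hC hC'
      split_ifs <;> grind

lemma Monic.sub_C_mul_of_natDegree_lt {g h : K[X]} (hg : g.Monic)
    (hh : h.natDegree < g.natDegree) (β : K) :
    (g - C β * h).Monic ∧ (g - C β * h).natDegree = g.natDegree := by
  have hlt : (C β * h).natDegree < g.natDegree := (natDegree_C_mul_le β h).trans_lt hh
  exact ⟨hg.sub_of_left (degree_lt_degree hlt), natDegree_sub_eq_left_of_natDegree_lt hlt⟩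

lemma _root_.IsCoprime.aeval_ne_zero_of_aeval_eq_zero {R A : Type*} [CommRing R] [CommRing A]
    [Algebra R A] [Nontrivial A] {p q : R[X]} (hpq : IsCoprime p q) {x : A}
    (hq : aeval x q = 0) : aeval x p ≠ 0 := fun hp => by
  have := hpq.map (aeval x).toRingHom
  rw [AlgHom.toRingHom_eq_coe, RingHom.coe_coe, hp, hq] at this
  exact not_isUnit_zero (isCoprime_zero_left.mp this)

end Polynomial

theorem stmt4_general {F : Type*} [Field F] (q : ℕ)
    (g h : F[X]) (hg : g.Monic) (hgdeg : g.natDegree = 3) (hhdeg : h.natDegree ≤ 2)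
    (hcop : IsCoprime g h)
    (n : ℕ)
    (E : Type*) [Field E] [Algebra F E] [Fintype E] (hE : Fintype.card E = q ^ n)
    (nA nB nC nD : ℕ)
    (hA : nA = {x : E | (Polynomial.aeval x) h = 0}.ncard)
    (hB : nB = {β : E | ∃ x y : E, x ≠ y ∧
        g.map (algebraMap F E) - C β * h.map (algebraMap F E)
          = (X - C x) ^ 2 * (X - C y)}.ncard)
    (hC : nC = {β : E | ∃ x : E,
        g.map (algebraMap F E) - C β * h.map (algebraMap F E)
          = (X - C x) ^ 3}.ncard)
    (hD : nD = {β : E | ∃ u : E[X], Irreducible u ∧ u.natDegree = 2 ∧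
        u ∣ (g.map (algebraMap F E) - C β * h.map (algebraMap F E))}.ncard) :
    ((Ubar g h E).ncard : ℚ) =
      (2 * (q : ℚ) ^ n + nA - nB - 2 * nC - 2 * nD) / 3 := by
  classical
  have hcubic (β : E) := (hg.map (algebraMap F E)).sub_C_mul_of_natDegree_lt
    (h := h.map (algebraMap F E))
    (by rw [hg.natDegree_map, hgdeg]; exact natDegree_map_le.trans_lt (by omega)) β
  rw [hg.natDegree_map, hgdeg] at hcubic
  have hroots : ∑ β : E,
      {x | (g.map (algebraMap F E) - C β * h.map (algebraMap F E)).IsRoot x}.ncard + nA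
        = q ^ n := by
    rw [hA, ← hE, ← sum_ncard_setOf_sub_mul_eq_zero_add_ncard (fun x => aeval x g)
      (fun x => aeval x h) fun x => hcop.aeval_ne_zero_of_aeval_eq_zero]
    simp [eval_map_algebraMap]
  have hpattern := Finset.sum_congr rfl fun β (_ : β ∈ Finset.univ) =>
    (hcubic β).1.ncard_setOf_isRoot_add_eq_three (hcubic β).2
  simp only [Finset.sum_add_distrib, ← Finset.mul_sum, ← Set.ncard_setOf_eq_sum_ite,
    Finset.sum_const, Finset.card_univ, hE, smul_eq_mul, ← hB, ← hC, ← hD] at hpattern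
  change _ + 3 * (Ubar g h E).ncard + _ + _ + _ = _ at hpattern
  rw [eq_div_iff three_ne_zero]
  qify at hroots hpattern
  linarith

/-- Lemma 4: `|Ū(n,q)| = (2q^n + A − B − 2C − 2D)/3`, where
`A` is the number of distinct roots of `h` in `F_{q^n}`,
`B` counts `β` for which `g − βh` has a double root and a distinct simple root in `F_{q^n}`,
`C` counts `β` for which `g − βh` has a triple root in `F_{q^n}`,
`D` counts `β` for which `g − βh` has an irreducible quadratic factor over `F_{q^n}`. -/
theorem stmt4 {F : Type*} [Field F] [Fintype F] (q : ℕ) (hq : Fintype.card F = q)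
    (g h : F[X]) (hg : g.Monic) (hgdeg : g.natDegree = 3) (hhdeg : h.natDegree ≤ 2)
    (hcop : IsCoprime g h)
    (n : ℕ) (hn : 1 ≤ n)
    (E : Type*) [Field E] [Algebra F E] [Fintype E] (hE : Fintype.card E = q ^ n)
    (nA nB nC nD : ℕ)
    (hA : nA = {x : E | (Polynomial.aeval x) h = 0}.ncard)
    (hB : nB = {β : E | ∃ x y : E, x ≠ y ∧
        g.map (algebraMap F E) - C β * h.map (algebraMap F E)
          = (X - C x) ^ 2 * (X - C y)}.ncard)
    (hC : nC = {β : E | ∃ x : E,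
        g.map (algebraMap F E) - C β * h.map (algebraMap F E)
          = (X - C x) ^ 3}.ncard)
    (hD : nD = {β : E | ∃ u : E[X], Irreducible u ∧ u.natDegree = 2 ∧
        u ∣ (g.map (algebraMap F E) - C β * h.map (algebraMap F E))}.ncard) :
    ((Ubar g h E).ncard : ℚ) =
      (2 * (q : ℚ) ^ n + nA - nB - 2 * nC - 2 * nD) / 3 :=
  stmt4_general q g h hg hgdeg hhdeg hcop n E hE nA nB nC nD hA hB hC hD
end

section
/- Let K be an arbitrary field and let p(x) = x^3 + a x^2 + b x + c ∈ K[x] be a separable cubic polynomial. Then the Galois group of p over K, viewed as a group of permutations of its three roots in a splitting field, is contained in the alternating group A_3 if and only if the quadratic resolvent x^2 + (ab − 3c)x + (a^3 c + b^3 + 9c^2 − 6abc) is reducible over K. -/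
/-!
Let `r₀, r₁, r₂` be the roots of `p` in its splitting field `L` and
`θ = r₀²r₁ + r₁²r₂ + r₂²r₀`. By Vieta the quadratic resolvent is `(X - θ)(X - θ')`, where `θ'` is
`θ` with `r₀, r₁` exchanged, and `θ' - θ = (r₀ - r₁)(r₁ - r₂)(r₂ - r₀) ≠ 0`. A permutation of the
roots fixes `θ` if it is even and sends it to `θ'` if it is odd, so the Galois group lies in `A₃`
iff `θ` is fixed by it, i.e. iff `θ ∈ K`, i.e. iff the resolvent has a root in `K`. Unlike the
criterion via the square root of the discriminant, this also works in characteristic `2`.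
-/

open Polynomial Equiv Function

section Resolvent

variable {R S : Type*} [CommRing R] [CommRing S]

def resolventRoot (r : Fin 3 → R) : R := r 0 ^ 2 * r 1 + r 1 ^ 2 * r 2 + r 2 ^ 2 * r 0

noncomputable def quadraticResolvent (a b c : R) : R[X] :=
  X ^ 2 + C (a * b - 3 * c) * X + C (a ^ 3 * c + b ^ 3 + 9 * c ^ 2 - 6 * a * b * c)

theorem map_resolventRoot {F : Type*} [FunLike F R S] [RingHomClass F R S] (f : F)
    (r : Fin 3 → R) : f (resolventRoot r) = resolventRoot (f ∘ r) := by
  simp [resolventRoot]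

theorem Fin.perm_three_cases (τ : Perm (Fin 3)) :
    (Perm.sign τ = 1 ∧ ((τ 0 = 0 ∧ τ 1 = 1 ∧ τ 2 = 2) ∨ (τ 0 = 1 ∧ τ 1 = 2 ∧ τ 2 = 0) ∨
      (τ 0 = 2 ∧ τ 1 = 0 ∧ τ 2 = 1))) ∨
    (Perm.sign τ ≠ 1 ∧ ((τ 0 = 1 ∧ τ 1 = 0 ∧ τ 2 = 2) ∨ (τ 0 = 0 ∧ τ 1 = 2 ∧ τ 2 = 1) ∨
      (τ 0 = 2 ∧ τ 1 = 1 ∧ τ 2 = 0))) := by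
  revert τ
  decide

theorem resolventRoot_comp_of_sign_eq_one (r : Fin 3 → R) {τ : Perm (Fin 3)}
    (hτ : Perm.sign τ = 1) : resolventRoot (r ∘ τ) = resolventRoot r := by
  obtain ⟨-, ⟨h0, h1, h2⟩ | ⟨h0, h1, h2⟩ | ⟨h0, h1, h2⟩⟩ :=
    (Fin.perm_three_cases τ).resolve_right fun h => h.1 hτ
  all_goals simp only [resolventRoot, comp_apply, h0, h1, h2] <;> ring

theorem resolventRoot_comp_swap (r : Fin 3 → R) :
    resolventRoot (r ∘ swap 0 1) = r 1 ^ 2 * r 0 + r 0 ^ 2 * r 2 + r 2 ^ 2 * r 1 := by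
  simp [resolventRoot, swap_apply_of_ne_of_ne]

theorem resolventRoot_comp_of_sign_ne_one (r : Fin 3 → R) {τ : Perm (Fin 3)}
    (hτ : Perm.sign τ ≠ 1) : resolventRoot (r ∘ τ) = resolventRoot (r ∘ swap 0 1) := by
  rw [resolventRoot_comp_swap]
  obtain ⟨-, ⟨h0, h1, h2⟩ | ⟨h0, h1, h2⟩ | ⟨h0, h1, h2⟩⟩ :=
    (Fin.perm_three_cases τ).resolve_left fun h => hτ h.1
  all_goals simp only [resolventRoot, comp_apply, h0, h1, h2] <;> ring

theorem resolventRoot_comp_eq_iff [IsDomain R] {r : Fin 3 → R} (hr : Injective r)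
    (τ : Perm (Fin 3)) : resolventRoot (r ∘ τ) = resolventRoot r ↔ Perm.sign τ = 1 := by
  refine ⟨fun h => ?_, resolventRoot_comp_of_sign_eq_one r⟩
  by_contra hτ
  have hdiff : (r 0 - r 1) * (r 1 - r 2) * (r 2 - r 0)
      = resolventRoot (r ∘ swap 0 1) - resolventRoot r := by
    rw [resolventRoot_comp_swap, resolventRoot]; ring
  rw [← resolventRoot_comp_of_sign_ne_one r hτ, h, sub_self] at hdiff
  simp [sub_eq_zero, hr.eq_iff] at hdiff

theorem quadraticResolvent_map (f : R →+* S) (a b c : R) :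
    (quadraticResolvent a b c).map f = quadraticResolvent (f a) (f b) (f c) := by
  simp [quadraticResolvent, map_ofNat]

theorem quadraticResolvent_eq_prod (r : Fin 3 → R) :
    quadraticResolvent (-(r 0 + r 1 + r 2)) (r 0 * r 1 + r 0 * r 2 + r 1 * r 2) (-(r 0 * r 1 * r 2))
      = (X - C (resolventRoot r)) * (X - C (resolventRoot (r ∘ swap 0 1))) := by
  rw [resolventRoot_comp_swap]
  simp only [quadraticResolvent, resolventRoot, C_sub, C_add, C_mul, C_neg, C_pow, C_ofNat]
  ring

theorem quadraticResolvent_map_eq_prod (f : R →+* S) {a b c : R} (r : Fin 3 → S)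
    (h : (X ^ 3 + C a * X ^ 2 + C b * X + C c).map f
      = (X - C (r 0)) * (X - C (r 1)) * (X - C (r 2))) :
    (quadraticResolvent a b c).map f
      = (X - C (resolventRoot r)) * (X - C (resolventRoot (r ∘ swap 0 1))) := by
  have hcubic : Cubic.toPoly ⟨1, f a, f b, f c⟩ = Cubic.toPoly ⟨1, -(r 0 + r 1 + r 2),
      r 0 * r 1 + r 0 * r 2 + r 1 * r 2, -(r 0 * r 1 * r 2)⟩ := by
    rw [← Cubic.prod_X_sub_C_eq, ← h]
    simp [Cubic.toPoly]
  obtain ⟨-, ha, hb, hc⟩ := Cubic.mk.inj ((Cubic.toPoly_injective _ _).mp hcubic)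
  rw [quadraticResolvent_map, ha, hb, hc, quadraticResolvent_eq_prod]

end Resolvent

theorem Polynomial.not_irreducible_iff_mem_range_of_map_eq {K L : Type*} [Field K] [Field L]
    (f : K →+* L) {q : K[X]} {u v : L} (h : q.map f = (X - C u) * (X - C v)) :
    ¬ Irreducible q ↔ u ∈ Set.range f := by
  have hdeg : q.natDegree = 2 := by
    rw [← natDegree_map f, h, (monic_X_sub_C u).natDegree_mul (monic_X_sub_C v),
      natDegree_X_sub_C, natDegree_X_sub_C]
  have hq : q ≠ 0 := by rintro rfl; simp at hdeg
  have hsum : u + v = -f (q.coeff 1) := by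
    have hexp : (X - C u) * (X - C v) = X ^ 2 - C (u + v) * X + C (u * v) := by
      simp only [C_add, C_mul]; ring
    rw [← coeff_map, h, hexp]
    simp [coeff_C]
  have hroot (t : K) : q.IsRoot t ↔ f t = u ∨ f t = v := by
    rw [← isRoot_map_iff f.injective, h]
    simp [sub_eq_zero]
  rw [irreducible_iff_roots_eq_zero_of_degree_le_three (by omega) (by omega),
    Multiset.eq_zero_iff_forall_notMem, not_forall_not]
  simp only [mem_roots hq, hroot]
  constructor
  · rintro ⟨t, rfl | rfl⟩
    · exact ⟨t, rfl⟩
    · exact ⟨-q.coeff 1 - t, by rw [map_sub, map_neg]; linear_combination -hsum⟩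
  · rintro ⟨t, rfl⟩
    exact ⟨t, Or.inl rfl⟩

theorem Polynomial.map_eq_prod_rootSet {K L : Type*} [Field K] [Field L] [Algebra K L]
    {p : K[X]} (hm : p.Monic) (hsep : p.Separable) (hs : (p.map (algebraMap K L)).Splits) :
    p.map (algebraMap K L) = ∏ x : p.rootSet L, (X - C (x : L)) := by
  classical
  rw [Finset.prod_set_coe (f := fun x => X - C x)]
  simp only [rootSet_def, Finset.toFinset_coe]
  rw [Finset.prod_eq_multiset_prod, Multiset.toFinset_val,
    Multiset.dedup_eq_self.mpr (nodup_roots hsep.map)]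
  exact hs.eq_prod_roots_of_monic (hm.map _)

theorem resolventRoot_fixed_iff_sign_eq_one {R α F : Type*} [CommRing R] [IsDomain R]
    [Fintype α] [DecidableEq α] [FunLike F R R] [RingHomClass F R R] (σ : F) {v : α → R}
    (hv : Injective v) (e : Fin 3 ≃ α) (π : Perm α) (hπ : ∀ x, σ (v x) = v (π x)) :
    σ (resolventRoot (v ∘ e)) = resolventRoot (v ∘ e) ↔ Perm.sign π = 1 := by
  have hcomp : σ ∘ v ∘ e = (v ∘ e) ∘ e.symm.permCongr π := by
    ext i; simp [hπ, permCongr_apply]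
  rw [map_resolventRoot, hcomp, resolventRoot_comp_eq_iff (hv.comp e.injective),
    Perm.sign_permCongr]

/-- Theorem (Kaplansky/Conrad): a separable cubic `x³ + ax² + bx + c` over an arbitrary
field `K` has Galois group contained in the alternating group `A₃` (i.e. every element of
the Galois group induces an even permutation of the three roots) if and only if its
quadratic resolvent `x² + (ab − 3c)x + (a³c + b³ + 9c² − 6abc)` is reducible over `K`. -/
theorem stmt5 {K : Type*} [Field K] (a b c : K)
    (p : K[X]) (hp : p = X ^ 3 + C a * X ^ 2 + C b * X + C c)
    (hsep : p.Separable) :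
    (∀ φ : p.Gal,
        @Equiv.Perm.sign _ (Classical.decEq _) _
          (@Polynomial.Gal.galActionHom K _ p p.SplittingField _ _
            ⟨SplittingField.splits p⟩ φ) = 1) ↔
      ¬ Irreducible (X ^ 2 + C (a * b - 3 * c) * X
          + C (a ^ 3 * c + b ^ 3 + 9 * c ^ 2 - 6 * a * b * c)) := by
  set L := p.SplittingField
  have hsplits : (p.map (algebraMap K L)).Splits := SplittingField.splits p
  have : Fact (p.map (algebraMap K L)).Splits := ⟨hsplits⟩
  have : IsGalois K L := IsGalois.of_separable_splitting_field hsep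
  have hdeg : p.natDegree = 3 := by rw [hp]; compute_degree!
  obtain ⟨e⟩ : Nonempty (Fin 3 ≃ p.rootSet L) := Fintype.card_eq.mp <| by
    rw [card_rootSet_eq_natDegree hsep hsplits, hdeg, Fintype.card_fin]
  have hroots : (X ^ 3 + C a * X ^ 2 + C b * X + C c).map (algebraMap K L)
      = (X - C (e 0 : L)) * (X - C (e 1 : L)) * (X - C (e 2 : L)) := by
    rw [← hp, map_eq_prod_rootSet (by rw [hp]; monicity!) hsep hsplits,
      ← e.prod_comp, Fin.prod_univ_three]
  have hres := quadraticResolvent_map_eq_prod (algebraMap K L) (fun i => (e i : L)) hroots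
  change _ ↔ ¬ Irreducible (quadraticResolvent a b c)
  -- On `L = p.SplittingField` itself, `p.Gal` acts on the roots through a chosen embedding
  -- `L → L`; `Gal.restrict_smul` describes the action after reparametrising by `Gal.restrict`.
  rw [not_irreducible_iff_mem_range_of_map_eq _ hres, IsGalois.mem_range_algebraMap_iff_fixed,
    (Gal.restrict_surjective p L).forall]
  refine forall_congr' fun ϕ => ?_
  let := Classical.decEq (p.rootSet L) -- the instance the statement uses for `sign`
  exact (resolventRoot_fixed_iff_sign_eq_one ϕ Subtype.val_injective e
    (Gal.galActionHom p L (Gal.restrict p L ϕ))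
    fun x => (Gal.restrict_smul ϕ x).symm).symm
end

section
/- Let g(x), h(x) ∈ F_q[x] be coprime with g monic of degree 3 and deg h ≤ 2, and let n ≥ 1. Then |Ū(n,q)| = (N + A − C)/3, where A is the number of distinct roots of h(x) in F_{q^n}; C is the number of β ∈ F_{q^n} for which g(x) − β h(x) has a triple root in F_{q^n}; and N is the number of pairs (x, β) ∈ F_{q^n} × F_{q^n} satisfying x^2 + s(β)x + t(β) = 0, where x^2 + s(β)x + t(β) denotes the quadratic resolvent of the monic cubic g(x) − β h(x). -/
/-!
Fix `β` and let `r₁, r₂, r₃` be the roots of the monic cubic `f = g - β h` in an algebraic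
closure of the finite field `E`. The quadratic resolvent of `f` has the roots
`r₁²r₂ + r₂²r₃ + r₃²r₁` and `r₁r₂² + r₂r₃² + r₃r₁²`, and an element of the closure lies in `E`
iff the Frobenius `y ↦ y ^ #E` fixes it. The Frobenius permutes the `rᵢ` (as a multiset), so it
fixes all of them, fixes one and swaps the other two, or cycles them; in each case one reads off
`#{roots of the resolvent in E} + 1 = 3·[f irreducible] + [f a cube] + #{roots of f in E}`.

Summing over `β`, the left side gives `N + |E|` and the right side `3|Ū| + C + (|E| - A)`:
every `x` with `h(x) ≠ 0` is a root of `g - β h` for exactly one `β`, while for `h(x) = 0`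
coprimality gives `g(x) ≠ 0`, so `x` is a root of none of them.
-/

open Polynomial
open Function (fixedPoints mem_fixedPoints IsFixedPt)

theorem FiniteField.pow_card_eq_self_iff_mem_range {E K : Type*} [Field E] [Fintype E] [Field K]
    [Algebra E K] {y : K} : y ^ Fintype.card E = y ↔ y ∈ Set.range (algebraMap E K) := by
  have hsplit : (X ^ Fintype.card E - X : E[X]).Splits := by
    rw [splits_iff_card_roots, roots_X_pow_card_sub_X, X_pow_card_sub_X_natDegree_eq E
      Fintype.one_lt_card, Finset.card_val, Finset.card_univ]
  have := roots_X_pow_card_sub_X E ▸ hsplit.roots_map (algebraMap E K) ▸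
    Multiset.mem_map (b := y)
  simpa [sub_eq_zero, eq_comm, (X_pow_card_sub_X_ne_zero K Fintype.one_lt_card).symm] using this

theorem Multiset.pair_eq_pair_iff {α : Type*} {x y a b : α} :
    ({x, y} : Multiset α) = {a, b} ↔ x = a ∧ y = b ∨ x = b ∧ y = a := by
  refine ⟨fun h ↦ ?_, ?_⟩
  · rcases Multiset.cons_eq_cons.mp h with ⟨rfl, hyb⟩ | ⟨-, cs, hy, hb⟩
    · exact Or.inl ⟨rfl, Multiset.singleton_inj.mp hyb⟩
    · obtain ⟨rfl, -⟩ := (Multiset.singleton_eq_cons_iff _).mp hy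
      obtain ⟨rfl, -⟩ := (Multiset.singleton_eq_cons_iff _).mp hb
      exact Or.inr ⟨rfl, rfl⟩
  · rintro (⟨rfl, rfl⟩ | ⟨rfl, rfl⟩)
    · rfl
    · exact Multiset.pair_comm _ _

theorem Multiset.exists_perm_cases_of_map_eq_self {α : Type*} (φ : α → α) {s : Multiset α}
    (hs : Multiset.card s = 3) (hφ : s.map φ = s) :
    ∃ r a b, s = {r, a, b} ∧
      (φ r = r ∧ φ a = a ∧ φ b = b ∨ φ r = r ∧ φ a = b ∧ φ b = a ∧ a ≠ b ∨
        φ r = a ∧ φ a = b ∧ φ b = r ∧ r ≠ a) := by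
  by_cases hfix : ∃ r ∈ s, φ r = r
  · obtain ⟨r, hr, hφr⟩ := hfix
    obtain ⟨t, rfl⟩ := Multiset.exists_cons_of_mem hr
    obtain ⟨a, b, rfl⟩ : ∃ a b, t = {a, b} := Multiset.card_eq_two.mp (by simpa using hs)
    have hab : ({φ a, φ b} : Multiset α) = {a, b} := by simpa [hφr] using hφ
    refine ⟨r, a, b, rfl, ?_⟩
    rcases Multiset.pair_eq_pair_iff.mp hab with ⟨ha, hb⟩ | ⟨ha, hb⟩
    · exact Or.inl ⟨hφr, ha, hb⟩
    · by_cases hab : a = b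
      · subst hab
        exact Or.inl ⟨hφr, ha, hb⟩
      · exact Or.inr (Or.inl ⟨hφr, ha, hb, hab⟩)
  push Not at hfix
  obtain ⟨r, a, b, rfl⟩ := Multiset.card_eq_three.mp hs
  have hperm : ({φ r, φ a, φ b} : Multiset α) = {r, a, b} := by simpa using hφ
  have hswap {x y z : α} : ({x, y, z} : Multiset α) = {x, z, y} :=
    congrArg (insert x) (Multiset.pair_comm y z)
  have hcycle {u v : α} (h : ({φ r, φ u, φ v} : Multiset α) = {r, u, v}) (hru : φ r = u)
      (hv : φ v ≠ v) : φ u = v ∧ φ v = r := by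
    simp only [Multiset.insert_eq_cons, hru, Multiset.cons_swap r u] at h
    rcases Multiset.pair_eq_pair_iff.mp ((Multiset.cons_inj_right u).mp h) with ⟨-, hv'⟩ | huv
    · exact absurd hv' hv
    · exact huv
  have hra : r ≠ φ r := (hfix r (by simp)).symm
  have hφr : φ r ∈ ({a, b} : Multiset α) := by
    have : φ r ∈ ({r, a, b} : Multiset α) := hperm ▸ by simp
    simpa [hra.symm] using this
  rcases Multiset.mem_cons.mp hφr with h | h
  · obtain ⟨ha, hb⟩ := hcycle hperm h (hfix b (by simp))
    exact ⟨r, a, b, rfl, Or.inr (Or.inr ⟨h, ha, hb, h ▸ hra⟩)⟩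
  · rw [Multiset.mem_singleton] at h
    obtain ⟨hb, ha⟩ := hcycle (hswap.trans (hperm.trans hswap)) h (hfix a (by simp))
    exact ⟨r, b, a, hswap, Or.inr (Or.inr ⟨h, hb, ha, h ▸ hra⟩)⟩

section CubicResolvent

variable {R : Type*} [CommRing R]

noncomputable def cubicResolvent (f : R[X]) : R[X] :=
  X ^ 2 + C (f.coeff 2 * f.coeff 1 - 3 * f.coeff 0) * X +
    C (f.coeff 2 ^ 3 * f.coeff 0 + f.coeff 1 ^ 3 + 9 * f.coeff 0 ^ 2
      - 6 * f.coeff 2 * f.coeff 1 * f.coeff 0)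

theorem eval_cubicResolvent (f : R[X]) (x : R) :
    (cubicResolvent f).eval x = x ^ 2 + (f.coeff 2 * f.coeff 1 - 3 * f.coeff 0) * x +
      (f.coeff 2 ^ 3 * f.coeff 0 + f.coeff 1 ^ 3 + 9 * f.coeff 0 ^ 2
        - 6 * f.coeff 2 * f.coeff 1 * f.coeff 0) := by
  simp [cubicResolvent]

theorem map_cubicResolvent {S : Type*} [CommRing S] (ι : R →+* S) (f : R[X]) :
    (cubicResolvent f).map ι = cubicResolvent (f.map ι) := by
  simp only [cubicResolvent, Polynomial.map_add, Polynomial.map_mul, Polynomial.map_pow, map_X,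
    Polynomial.map_C, coeff_map]
  simp only [map_sub, map_mul, map_add, map_pow, map_ofNat]

theorem cubicResolvent_X_sub_C_mul (r a b : R) :
    cubicResolvent ((X - C r) * (X - C a) * (X - C b)) =
      (X - C (r ^ 2 * a + a ^ 2 * b + b ^ 2 * r)) *
        (X - C (r * a ^ 2 + a * b ^ 2 + b * r ^ 2)) := by
  have hf : (X - C r) * (X - C a) * (X - C b) =
      X ^ 3 + C (-(r + a + b)) * X ^ 2 + C (r * a + r * b + a * b) * X + C (-(r * a * b)) := by
    simp only [map_neg, map_add, map_mul]
    ring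
  simp only [cubicResolvent, hf, coeff_add, coeff_X_pow, coeff_C_mul, coeff_X, coeff_C]
  simp only [map_neg, map_add, map_sub, map_mul, map_pow, map_ofNat]
  norm_num
  ring

end CubicResolvent

section ResolventRoots

variable {K : Type*} [Field K]

theorem resolventRoots_eq_iff {r a b : K} :
    r ^ 2 * a + a ^ 2 * b + b ^ 2 * r = r * a ^ 2 + a * b ^ 2 + b * r ^ 2 ↔
      r = a ∨ a = b ∨ r = b := by
  rw [← sub_eq_zero, show r ^ 2 * a + a ^ 2 * b + b ^ 2 * r - (r * a ^ 2 + a * b ^ 2 + b * r ^ 2)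
    = (r - a) * (a - b) * (r - b) by ring]
  simp [sub_eq_zero, or_assoc]

variable [DecidableEq K]

theorem ncard_resolventRoots_add_one (r a b : K) :
    ({r ^ 2 * a + a ^ 2 * b + b ^ 2 * r, r * a ^ 2 + a * b ^ 2 + b * r ^ 2} : Set K).ncard + 1 =
      (if r = a ∧ a = b then 1 else 0) + ({r, a, b} : Set K).ncard := by
  by_cases hdist : r ≠ a ∧ a ≠ b ∧ r ≠ b
  · obtain ⟨hra, hab, hrb⟩ := hdist
    rw [Set.ncard_pair (by simp [resolventRoots_eq_iff, hra, hab, hrb]),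
      Set.ncard_eq_three.mpr ⟨r, a, b, hra, hrb, hab, rfl⟩, if_neg (by tauto)]
  · rw [resolventRoots_eq_iff.mpr (by tauto), Set.pair_eq_singleton, Set.ncard_singleton]
    by_cases hra : r = a <;> by_cases hab : a = b <;> by_cases hrb : r = b <;> simp_all

variable (φ : K →+* K)

theorem ncard_inter_fixedPoints_of_fixed {r a b : K} (hr : φ r = r) (ha : φ a = a)
    (hb : φ b = b) :
    (({r ^ 2 * a + a ^ 2 * b + b ^ 2 * r, r * a ^ 2 + a * b ^ 2 + b * r ^ 2} : Set K) ∩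
        fixedPoints φ).ncard + 1 =
      3 * (if (({r, a, b} : Set K) ∩ fixedPoints φ).ncard = 0 then 1 else 0) +
        (if r = a ∧ a = b then 1 else 0) + (({r, a, b} : Set K) ∩ fixedPoints φ).ncard := by
  have hroots : ({r, a, b} : Set K) ⊆ fixedPoints φ := by
    rintro y (rfl | rfl | rfl) <;> assumption
  have hres : ({r ^ 2 * a + a ^ 2 * b + b ^ 2 * r, r * a ^ 2 + a * b ^ 2 + b * r ^ 2} : Set K) ⊆
      fixedPoints φ := by
    rintro y (rfl | rfl) <;> simp [IsFixedPt, hr, ha, hb]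
  rw [Set.inter_eq_left.mpr hroots, Set.inter_eq_left.mpr hres, ncard_resolventRoots_add_one,
    if_neg (Set.ncard_ne_zero_of_mem (Set.mem_insert r _))]
  ring

theorem ncard_inter_fixedPoints_of_swap {r a b : K} (hr : φ r = r) (ha : φ a = b)
    (hb : φ b = a) (hab : a ≠ b) :
    (({r ^ 2 * a + a ^ 2 * b + b ^ 2 * r, r * a ^ 2 + a * b ^ 2 + b * r ^ 2} : Set K) ∩
        fixedPoints φ).ncard + 1 =
      3 * (if (({r, a, b} : Set K) ∩ fixedPoints φ).ncard = 0 then 1 else 0) +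
        (if r = a ∧ a = b then 1 else 0) + (({r, a, b} : Set K) ∩ fixedPoints φ).ncard := by
  have hra : r ≠ a := by rintro rfl; exact hab (ha.symm.trans hr).symm
  have hrb : r ≠ b := by rintro rfl; exact hab (hr.symm.trans hb).symm
  have hroots : ({r, a, b} : Set K) ∩ fixedPoints φ = {r} := by
    ext y
    simp only [Set.mem_inter_iff, Set.mem_insert_iff, Set.mem_singleton_iff, mem_fixedPoints,
      IsFixedPt]
    constructor
    · rintro ⟨rfl | rfl | rfl, hy⟩
      · rfl
      · exact absurd (ha.symm.trans hy).symm hab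
      · exact absurd (hb.symm.trans hy).symm hab.symm
    · rintro rfl
      exact ⟨Or.inl rfl, hr⟩
  have hne : r ^ 2 * a + a ^ 2 * b + b ^ 2 * r ≠ r * a ^ 2 + a * b ^ 2 + b * r ^ 2 := by
    simp [resolventRoots_eq_iff, hra, hab, hrb]
  have hφ : φ (r ^ 2 * a + a ^ 2 * b + b ^ 2 * r) = r * a ^ 2 + a * b ^ 2 + b * r ^ 2 := by
    simp only [map_add, map_mul, map_pow, hr, ha, hb]
    ring
  have hφ' : φ (r * a ^ 2 + a * b ^ 2 + b * r ^ 2) = r ^ 2 * a + a ^ 2 * b + b ^ 2 * r := by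
    simp only [map_add, map_mul, map_pow, hr, ha, hb]
    ring
  have hres : ({r ^ 2 * a + a ^ 2 * b + b ^ 2 * r, r * a ^ 2 + a * b ^ 2 + b * r ^ 2} : Set K) ∩
      fixedPoints φ = ∅ := by
    ext y
    simp only [Set.mem_inter_iff, Set.mem_insert_iff, Set.mem_singleton_iff, mem_fixedPoints,
      IsFixedPt, Set.mem_empty_iff_false, iff_false, not_and]
    rintro (rfl | rfl) h
    · exact hne (hφ ▸ h).symm
    · exact hne (hφ' ▸ h)
  rw [hroots, hres, Set.ncard_singleton, Set.ncard_empty]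
  simp [hab]

theorem ncard_inter_fixedPoints_of_cycle {r a b : K} (hr : φ r = a) (ha : φ a = b)
    (hb : φ b = r) (hra : r ≠ a) :
    (({r ^ 2 * a + a ^ 2 * b + b ^ 2 * r, r * a ^ 2 + a * b ^ 2 + b * r ^ 2} : Set K) ∩
        fixedPoints φ).ncard + 1 =
      3 * (if (({r, a, b} : Set K) ∩ fixedPoints φ).ncard = 0 then 1 else 0) +
        (if r = a ∧ a = b then 1 else 0) + (({r, a, b} : Set K) ∩ fixedPoints φ).ncard := by
  have hab : a ≠ b := by rintro rfl; exact hra (hb.symm.trans ha)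
  have hrb : r ≠ b := by rintro rfl; exact hra (hr.symm.trans hb).symm
  have hroots : ({r, a, b} : Set K) ∩ fixedPoints φ = ∅ := by
    ext y
    simp only [Set.mem_inter_iff, Set.mem_insert_iff, Set.mem_singleton_iff, mem_fixedPoints,
      IsFixedPt, Set.mem_empty_iff_false, iff_false, not_and]
    rintro (rfl | rfl | rfl)
    · rw [hr]; exact hra.symm
    · rw [ha]; exact hab.symm
    · rw [hb]; exact hrb
  have hres : ({r ^ 2 * a + a ^ 2 * b + b ^ 2 * r, r * a ^ 2 + a * b ^ 2 + b * r ^ 2} : Set K) ⊆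
      fixedPoints φ := by
    rintro y (rfl | rfl) <;>
      simp only [mem_fixedPoints, IsFixedPt, map_add, map_mul, map_pow, hr, ha, hb] <;> ring
  rw [hroots, Set.inter_eq_left.mpr hres,
    Set.ncard_pair (by simp [resolventRoots_eq_iff, hra, hab, hrb]), Set.ncard_empty]
  simp [hra]

end ResolventRoots

theorem ncard_setOf_eval_eq_zero {E K : Type*} [Field E] [Field K] (ι : E →+* K) (p : E[X]) :
    {x | p.eval x = 0}.ncard = ({y | (p.map ι).eval y = 0} ∩ Set.range ι).ncard := by
  rw [← Set.image_preimage_eq_inter_range, Set.ncard_image_of_injective _ ι.injective]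
  congr 1
  ext x
  simp [eval_map_apply]

theorem irreducible_iff_ncard_setOf_eval_eq_zero {E : Type*} [Field E] [Finite E] {f : E[X]}
    (h3 : f.natDegree = 3) : Irreducible f ↔ {x | f.eval x = 0}.ncard = 0 := by
  have hf : f ≠ 0 := by rintro rfl; simp at h3
  rw [irreducible_iff_roots_eq_zero_of_degree_le_three (by omega) (by omega),
    Multiset.eq_zero_iff_forall_notMem, Set.ncard_eq_zero]
  simp [Set.eq_empty_iff_forall_notMem, mem_roots hf]

theorem exists_eq_X_sub_C_pow_three_iff {E K : Type*} [Field E] [Field K] {ι : E →+* K}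
    {f : E[X]} {r a b : K} (hf : f.map ι = (X - C r) * (X - C a) * (X - C b)) :
    (∃ x, f = (X - C x) ^ 3) ↔ r = a ∧ a = b ∧ r ∈ Set.range ι := by
  constructor
  · rintro ⟨x, rfl⟩
    have hroot {y : K} (hy : ((X - C r) * (X - C a) * (X - C b)).eval y = 0) : y = ι x := by
      rw [← hf] at hy
      simpa [sub_eq_zero] using hy
    obtain ⟨hr, ha, hb⟩ : r = ι x ∧ a = ι x ∧ b = ι x :=
      ⟨hroot (by simp), hroot (by simp), hroot (by simp)⟩
    exact ⟨hr.trans ha.symm, ha.trans hb.symm, x, hr.symm⟩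
  · rintro ⟨rfl, rfl, x, rfl⟩
    refine ⟨x, map_injective ι ι.injective ?_⟩
    rw [hf, Polynomial.map_pow, Polynomial.map_sub, map_X, map_C]
    ring

open Classical in
theorem ncard_setOf_eval_cubicResolvent_add_one_of_map_eq {E K : Type*} [Field E] [Fintype E]
    [Field K] (ι : E →+* K) (φ : K →+* K) (hrange : Set.range ι = fixedPoints φ) {f : E[X]}
    (h3 : f.natDegree = 3) {r a b : K} (hf : f.map ι = (X - C r) * (X - C a) * (X - C b))
    (hperm : φ r = r ∧ φ a = a ∧ φ b = b ∨
      φ r = r ∧ φ a = b ∧ φ b = a ∧ a ≠ b ∨ φ r = a ∧ φ a = b ∧ φ b = r ∧ r ≠ a) :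
    {x | (cubicResolvent f).eval x = 0}.ncard + 1 =
      3 * (if Irreducible f then 1 else 0) + (if ∃ x, f = (X - C x) ^ 3 then 1 else 0) +
        {x | f.eval x = 0}.ncard := by
  have hcube : (∃ x, f = (X - C x) ^ 3) ↔ r = a ∧ a = b := by
    rw [exists_eq_X_sub_C_pow_three_iff hf, hrange]
    refine ⟨fun h ↦ ⟨h.1, h.2.1⟩, fun ⟨hra, hab⟩ ↦ ⟨hra, hab, ?_⟩⟩
    rcases hperm with ⟨hr, -⟩ | ⟨-, -, -, hab'⟩ | ⟨-, -, -, hra'⟩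
    · exact hr
    · exact absurd hab hab'
    · exact absurd hra hra'
  have hroots : {y | ((X - C r) * (X - C a) * (X - C b)).eval y = 0} = {r, a, b} := by
    ext y
    simp [sub_eq_zero, or_assoc]
  have hres : {y | ((X - C (r ^ 2 * a + a ^ 2 * b + b ^ 2 * r)) *
      (X - C (r * a ^ 2 + a * b ^ 2 + b * r ^ 2))).eval y = 0} =
      {r ^ 2 * a + a ^ 2 * b + b ^ 2 * r, r * a ^ 2 + a * b ^ 2 + b * r ^ 2} := by
    ext y
    simp [sub_eq_zero]
  rw [if_congr (irreducible_iff_ncard_setOf_eval_eq_zero h3) rfl rfl, if_congr hcube rfl rfl,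
    ncard_setOf_eval_eq_zero ι, ncard_setOf_eval_eq_zero ι, map_cubicResolvent, hf,
    cubicResolvent_X_sub_C_mul, hrange, hroots, hres]
  rcases hperm with ⟨hr, ha, hb⟩ | ⟨hr, ha, hb, hab⟩ | ⟨hr, ha, hb, hra⟩
  · exact ncard_inter_fixedPoints_of_fixed φ hr ha hb
  · exact ncard_inter_fixedPoints_of_swap φ hr ha hb hab
  · exact ncard_inter_fixedPoints_of_cycle φ hr ha hb hra

open Classical in
theorem ncard_setOf_eval_cubicResolvent_add_one {E : Type*} [Field E] [Fintype E] {f : E[X]}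
    (hf : f.Monic) (h3 : f.natDegree = 3) :
    {x | (cubicResolvent f).eval x = 0}.ncard + 1 =
      3 * (if Irreducible f then 1 else 0) + (if ∃ x, f = (X - C x) ^ 3 then 1 else 0) +
        {x | f.eval x = 0}.ncard := by
  let ι := algebraMap E (AlgebraicClosure E)
  let φ := (FiniteField.frobeniusAlgHom E (AlgebraicClosure E)).toRingHom
  have hrange : Set.range ι = fixedPoints φ := by
    ext y
    rw [← FiniteField.pow_card_eq_self_iff_mem_range]
    rfl
  have hsplit : (f.map ι).Splits := IsAlgClosed.splits _
  have hcard : Multiset.card (f.map ι).roots = 3 := by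
    rw [splits_iff_card_roots.mp hsplit, hf.natDegree_map, h3]
  have hφ : (f.map ι).roots.map φ = (f.map ι).roots := by
    rw [← hsplit.roots_map, Polynomial.map_map]
    congr 2
    exact RingHom.ext (FiniteField.frobeniusAlgHom E _).commutes
  obtain ⟨r, a, b, hrab, hperm⟩ := Multiset.exists_perm_cases_of_map_eq_self φ hcard hφ
  have hprod : f.map ι = (X - C r) * (X - C a) * (X - C b) := by
    rw [hsplit.eq_prod_roots_of_monic (hf.map ι), hrab]
    simp [mul_assoc]
  exact ncard_setOf_eval_cubicResolvent_add_one_of_map_eq ι φ hrange h3 hprod hperm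

theorem Polynomial.Monic.sub_C_mul {R : Type*} [CommRing R] {g h : R[X]} (hg : g.Monic)
    (hh : h.natDegree < g.natDegree) (β : R) :
    (g - C β * h).Monic ∧ (g - C β * h).natDegree = g.natDegree := by
  have hlt : (C β * h).natDegree < g.natDegree := (natDegree_C_mul_le β h).trans_lt hh
  exact ⟨hg.sub_of_left (degree_lt_degree hlt), natDegree_sub_eq_left_of_natDegree_lt hlt⟩

theorem Set.ncard_setOf_eq_sum {α : Type*} [Fintype α] (p : α → Prop) [DecidablePred p] :
    {a | p a}.ncard = ∑ a, if p a then 1 else 0 := by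
  rw [Set.ncard_eq_toFinset_card', Set.toFinset_ofPred, Finset.card_filter]

theorem Set.ncard_setOf_prod_eq_sum {α β : Type*} [Fintype α] [Fintype β]
    (p : α × β → Prop) :
    {z | p z}.ncard = ∑ b, {a | p (a, b)}.ncard := by
  classical
  simp only [Set.ncard_setOf_eq_sum, Fintype.sum_prod_type_right]

theorem sum_ncard_setOf_eval_sub_C_mul_add {E : Type*} [Field E] [Fintype E] {g h : E[X]}
    (hcop : IsCoprime g h) :
    ∑ β, {x | (g - C β * h).eval x = 0}.ncard + {x | h.eval x = 0}.ncard = Fintype.card E := by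
  classical
  have hfiber (x : E) :
      {β | (g - C β * h).eval x = 0}.ncard = if h.eval x = 0 then 0 else 1 := by
    split_ifs with hx
    · have hgx : g.eval x ≠ 0 := fun hgx ↦ by
        obtain ⟨u, v, huv⟩ := hcop
        simpa [hx, hgx] using congrArg (eval x) huv
      simp [hx, hgx]
    · rw [← Set.ncard_singleton (g.eval x / h.eval x)]
      congr 1
      ext β
      rw [Set.mem_ofPred_eq, eval_sub, eval_mul, eval_C, sub_eq_zero, Set.mem_singleton_iff,
        eq_div_iff hx, eq_comm]
  simp only [Set.ncard_setOf_eq_sum]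
  rw [Finset.sum_comm]
  simp only [← Set.ncard_setOf_eq_sum, hfiber]
  rw [Set.ncard_setOf_eq_sum, ← Finset.sum_add_distrib, ← Finset.card_univ,
    Finset.card_eq_sum_ones]
  exact Finset.sum_congr rfl fun x _ ↦ by split_ifs <;> rfl

theorem stmt6_general {F : Type*} [Field F]
    (g h : F[X]) (hg : g.Monic) (hgdeg : g.natDegree = 3) (hhdeg : h.natDegree ≤ 2)
    (hcop : IsCoprime g h)
    (E : Type*) [Field E] [Algebra F E] [Fintype E]
    (P : E → E[X])
    (hP : P = fun β => g.map (algebraMap F E) - C β * h.map (algebraMap F E))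
    (nA nC nN : ℕ)
    (hA : nA = {x : E | (Polynomial.aeval x) h = 0}.ncard)
    (hC : nC = {β : E | ∃ x : E, P β = (X - C x) ^ 3}.ncard)
    (hN : nN = {z : E × E |
        z.1 ^ 2 + ((P z.2).coeff 2 * (P z.2).coeff 1 - 3 * (P z.2).coeff 0) * z.1
          + ((P z.2).coeff 2 ^ 3 * (P z.2).coeff 0 + (P z.2).coeff 1 ^ 3
            + 9 * (P z.2).coeff 0 ^ 2
            - 6 * (P z.2).coeff 2 * (P z.2).coeff 1 * (P z.2).coeff 0) = 0}.ncard) :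
    ((Ubar g h E).ncard : ℚ) = (nN + nA - nC) / 3 := by
  classical
  have hPβ (β : E) : P β = g.map (algebraMap F E) - C β * h.map (algebraMap F E) := by rw [hP]
  have hcubic (β : E) : (P β).Monic ∧ (P β).natDegree = 3 := by
    rw [hPβ, ← hgdeg, ← hg.natDegree_map (algebraMap F E)]
    exact (hg.map _).sub_C_mul (natDegree_map_le.trans_lt (by rw [hg.natDegree_map]; omega)) β
  have hpairs : ∑ β, {x | (P β).eval x = 0}.ncard + nA = Fintype.card E := by
    simp only [hPβ, hA, ← eval_map_algebraMap]
    exact sum_ncard_setOf_eval_sub_C_mul_add (hcop.map (mapRingHom (algebraMap F E)))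
  have hU : (Ubar g h E).ncard = ∑ β, if Irreducible (P β) then 1 else 0 := by
    rw [← Set.ncard_setOf_eq_sum, hP]
    rfl
  have hN' : nN = ∑ β, {x | (cubicResolvent (P β)).eval x = 0}.ncard := by
    rw [hN, Set.ncard_setOf_prod_eq_sum]
    simp only [eval_cubicResolvent]
  have hcount : nN + Fintype.card E = 3 * (Ubar g h E).ncard + nC +
      ∑ β, {x | (P β).eval x = 0}.ncard := by
    rw [hN', hU, hC, Set.ncard_setOf_eq_sum, Finset.mul_sum, ← Finset.card_univ,
      Finset.card_eq_sum_ones]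
    simp only [← Finset.sum_add_distrib]
    exact Finset.sum_congr rfl fun β _ ↦
      ncard_setOf_eval_cubicResolvent_add_one (hcubic β).1 (hcubic β).2
  rw [eq_div_iff three_ne_zero, eq_sub_iff_add_eq]
  exact_mod_cast (by omega : (Ubar g h E).ncard * 3 + nC = nN + nA)

/-- The quadratic resolvent `x² + (ab − 3c)x + (a³c + b³ + 9c² − 6abc)` of a monic cubic
`x³ + ax² + bx + c`; here applied with `a, b, c` the coefficients of the monic cubic
`g(x) − β h(x)`. Lemma 6 (first form): `|Ū(n,q)| = (N + A − C)/3` where `N` is the number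
of points `(x, β) ∈ F_{q^n} × F_{q^n}` on the curve given by the quadratic resolvent. -/
theorem stmt6 {F : Type*} [Field F] [Fintype F] (q : ℕ) (hq : Fintype.card F = q)
    (g h : F[X]) (hg : g.Monic) (hgdeg : g.natDegree = 3) (hhdeg : h.natDegree ≤ 2)
    (hcop : IsCoprime g h)
    (n : ℕ) (hn : 1 ≤ n)
    (E : Type*) [Field E] [Algebra F E] [Fintype E] (hE : Fintype.card E = q ^ n)
    (P : E → E[X])
    (hP : P = fun β => g.map (algebraMap F E) - C β * h.map (algebraMap F E))
    (nA nC nN : ℕ)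
    (hA : nA = {x : E | (Polynomial.aeval x) h = 0}.ncard)
    (hC : nC = {β : E | ∃ x : E, P β = (X - C x) ^ 3}.ncard)
    (hN : nN = {z : E × E |
        z.1 ^ 2 + ((P z.2).coeff 2 * (P z.2).coeff 1 - 3 * (P z.2).coeff 0) * z.1
          + ((P z.2).coeff 2 ^ 3 * (P z.2).coeff 0 + (P z.2).coeff 1 ^ 3
            + 9 * (P z.2).coeff 0 ^ 2
            - 6 * (P z.2).coeff 2 * (P z.2).coeff 1 * (P z.2).coeff 0) = 0}.ncard) :
    ((Ubar g h E).ncard : ℚ) = (nN + nA - nC) / 3 :=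
  stmt6_general g h hg hgdeg hhdeg hcop E P hP nA nC nN hA hC hN
end
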